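/- arXiv:2411.08635 — 14 statements merged into one kernel-verified Lean document; each statement's English description precedes it below -/
import Mathlib

section
/- Let A = ⟨2^(I∪O), Q, q₀, δ, α⟩ be a nondeterministic Büchi word automaton and let H ⊆ I∪O. Define the transition function δ^H : Q × 2^(I∪O) → 2^Q by δ^H(q,σ) = ⋃_{σ' ∈ noise_H(σ)} δ(q,σ'), where noise_H(σ) = {σ' ∈ 2^(I∪O) : σ' ∩ V = σ ∩ V} and V = (I∪O)∖H. Then the nondeterministic Büchi automaton A^H = ⟨2^(I∪O), Q, q₀, δ^H, α⟩ satisfies L(A^H) = noise_H(L(A)), where noise_H(L) = ⋃_{w ∈ L} noise_H(w) and, for an infinite word w, noise_H(w) = {w' : w'|_V = w|_V} (letterwise restriction to V). -/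
open Set

/-- Infinite words over alphabet `A`. -/
abbrev Word (A : Type) := ℕ → A

/-- `noiseW H w`: all words that agree with `w` on the visible signals `Hᶜ`. -/
def noiseW {A : Type} (H : Set A) (w : Word (Set A)) : Set (Word (Set A)) :=
  {w' | ∀ j, w' j ∩ Hᶜ = w j ∩ Hᶜ}

/-- `noiseLetter H σ`: all letters that agree with `σ` on the visible signals `Hᶜ`. -/
def noiseLetter {A : Type} (H : Set A) (σ : Set A) : Set (Set A) :=
  {σ' | σ' ∩ Hᶜ = σ ∩ Hᶜ}

/-- A nondeterministic Büchi word automaton with alphabet `A` and state set `Q`. -/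
structure NBW (A Q : Type) where
  q0 : Q
  δ : Q → A → Set Q
  α : Set Q

/-- `r` is a run of `N` on `w`. -/
def NBW.IsRun {A Q : Type} (N : NBW A Q) (r : Word Q) (w : Word A) : Prop :=
  r 0 = N.q0 ∧ ∀ j, r (j + 1) ∈ N.δ (r j) (w j)

/-- The set of states occurring infinitely often in `r`. -/
def infOcc {Q : Type} (r : Word Q) : Set Q := {q | ∀ N, ∃ n ≥ N, r n = q}

/-- The language of an NBW: words having an accepting run. -/
def NBW.lang {A Q : Type} (N : NBW A Q) : Set (Word A) :=
  {w | ∃ r, N.IsRun r w ∧ (infOcc r ∩ N.α).Nonempty}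

/-- the NBW `A^H` obtained by existentially guessing the hidden signals
recognizes exactly `noise_H(L(A))`. -/
theorem noise_nbw {I O : Type} [Fintype I] [Fintype O] {Q : Type} [Fintype Q]
    (A : NBW (Set (I ⊕ O)) Q) (H : Set (I ⊕ O)) :
    NBW.lang
      { q0 := A.q0,
        δ := fun q σ => ⋃ σ' ∈ noiseLetter H σ, A.δ q σ',
        α := A.α } = ⋃ w ∈ A.lang, noiseW H w := by
  ext w
  constructor
  · rintro ⟨r, ⟨hr0, hrs⟩, hacc⟩
    choose σ' hσ' hδ using fun j => mem_iUnion₂.mp (hrs j)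
    refine mem_iUnion₂.mpr ⟨σ', ⟨r, ⟨hr0, hδ⟩, hacc⟩, ?_⟩
    intro j
    exact (hσ' j).symm
  · intro hw
    obtain ⟨w', hw', hmem⟩ := mem_iUnion₂.mp hw
    obtain ⟨r, ⟨hr0, hrs⟩, hacc⟩ := hw'
    refine ⟨r, ⟨hr0, fun j => ?_⟩, hacc⟩
    exact mem_iUnion₂.mpr ⟨w' j, (hmem j).symm, hrs j⟩
end

section
/- Let I and O be disjoint finite sets of signals, let L_φ ⊆ (2^(I∪O))^ω, let p ∉ I∪O be a fresh output signal, and set O' = O ∪ {p}. Let L_φ↑ = {w ∈ (2^(I∪O'))^ω : w|_(I∪O) ∈ L_φ} (letterwise restriction) and L_ψ = {w ∈ (2^(I∪O'))^ω : p ∈ w₀}. Then L_φ is realizable by an (I/O)-transducer if and only if ⟨L_φ↑, L_ψ, {p}⟩ is realizable with privacy by an (I/O')-transducer. -/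
open Set

/-- A transducer with input alphabet `Ain` and output alphabet `Aout`. -/
structure Transd (Ain Aout : Type) where
  S : Type
  fintype_S : Fintype S
  s0 : S
  η : S → Ain → S
  τ : S → Aout

def Transd.stateAt {Ain Aout : Type} (T : Transd Ain Aout) (w : Word Ain) : ℕ → T.S
  | 0 => T.η T.s0 (w 0)
  | n + 1 => T.η (T.stateAt w n) (w (n + 1))

def Transd.out {Ain Aout : Type} (T : Transd Ain Aout) (w : Word Ain) (j : ℕ) : Aout :=
  T.τ (T.stateAt w j)

/-- The computation of an (I/O)-transducer on an input word. -/
def ioComp {I O : Type} (T : Transd (Set I) (Set O)) (wI : Word (Set I)) :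
    Word (Set (I ⊕ O)) :=
  fun j => Sum.inl '' wI j ∪ Sum.inr '' T.out wI j

/-- `T` realizes the language `L`. -/
def Transd.realizes {I O : Type} (T : Transd (Set I) (Set O))
    (L : Set (Word (Set (I ⊕ O)))) : Prop :=
  ∀ wI, ioComp T wI ∈ L

/-- `T` `H`-hides the secret `Lψ`. -/
def Transd.hides {I O : Type} (T : Transd (Set I) (Set O)) (H : Set (I ⊕ O))
    (Lψ : Set (Word (Set (I ⊕ O)))) : Prop :=
  ∀ wI, ∃ wp ∈ noiseW H (ioComp T wI), ∃ wm ∈ noiseW H (ioComp T wI), wp ∈ Lψ ∧ wm ∉ Lψ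

/-!
Relabelling the outputs of a transducer without changing its states turns a realizer of `Lφ`
into one of `Lφ↑` (output `o` as `inl o`, never `p`) and back (forget `p`). Privacy costs nothing:
the secret only asks whether `p` holds at time `0`, and since `p` is hidden the noise may switch it
on or off at will, whatever the transducer does.
-/

namespace Transd

variable {Ain A B C : Type}

def mapOut (T : Transd Ain A) (f : A → B) : Transd Ain B :=
  ⟨T.S, T.fintype_S, T.s0, T.η, f ∘ T.τ⟩

@[simp]
theorem mapOut_mapOut (T : Transd Ain A) (f : A → B) (g : B → C) :
    (T.mapOut f).mapOut g = T.mapOut (g ∘ f) := rfl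

theorem stateAt_mapOut (T : Transd Ain A) (f : A → B) (w : Word Ain) (n : ℕ) :
    (T.mapOut f).stateAt w n = T.stateAt w n := by
  induction n with
  | zero => rfl
  | succ n ih => exact congrArg (T.η · (w (n + 1))) ih

@[simp]
theorem out_mapOut (T : Transd Ain A) (f : A → B) (w : Word Ain) (j : ℕ) :
    (T.mapOut f).out w j = f (T.out w j) :=
  congrArg (f ∘ T.τ) (T.stateAt_mapOut f w j)

end Transd

theorem ioComp_mapOut_preimage {I O O' : Type} (T : Transd (Set I) (Set O')) (g : O → O')
    (wI : Word (Set I)) :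
    ioComp (T.mapOut (g ⁻¹' ·)) wI = fun j => Sum.map id g ⁻¹' ioComp T wI j := by
  funext j
  ext (i | o) <;> simp [ioComp]

theorem ioComp_mapOut_image {I O O' : Type} (T : Transd (Set I) (Set O)) {g : O → O'}
    (hg : Function.Injective g) (wI : Word (Set I)) :
    (fun j => Sum.map id g ⁻¹' ioComp (T.mapOut (g '' ·)) wI j) = ioComp T wI := by
  rw [← ioComp_mapOut_preimage, Transd.mapOut_mapOut]
  simp only [Function.comp_def, hg.preimage_image]
  rfl

theorem insert_mem_noiseW {A : Type} (x : A) (w : Word (Set A)) :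
    (fun j => insert x (w j)) ∈ noiseW {x} w := fun j => by
  rw [insert_inter_of_notMem (by simp)]

theorem diff_mem_noiseW {A : Type} (x : A) (w : Word (Set A)) :
    (fun j => w j \ {x}) ∈ noiseW {x} w := fun j => by
  simp only [sdiff_eq, inter_assoc, inter_self]

theorem Transd.hides_mem_zero {I O : Type} (T : Transd (Set I) (Set O)) (x : I ⊕ O) :
    T.hides {x} {w | x ∈ w 0} := fun _ =>
  ⟨_, insert_mem_noiseW x _, _, diff_mem_noiseW x _, mem_insert x _, fun h => h.2 rfl⟩

theorem realizable_iff_privacy_with_fresh_signal_general {I O : Type}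
    (Lφ : Set (Word (Set (I ⊕ O)))) :
    (∃ T : Transd (Set I) (Set O), T.realizes Lφ) ↔
    (∃ T' : Transd (Set I) (Set (O ⊕ Unit)),
      T'.realizes
        {w | (fun j => (Sum.map id Sum.inl : I ⊕ O → I ⊕ (O ⊕ Unit)) ⁻¹' w j) ∈ Lφ} ∧
      T'.hides {Sum.inr (Sum.inr ())} {w | Sum.inr (Sum.inr ()) ∈ w 0}) := by
  constructor
  · rintro ⟨T, hT⟩
    refine ⟨T.mapOut (Sum.inl '' ·), fun wI => ?_, Transd.hides_mem_zero _ _⟩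
    show _ ∈ Lφ
    rw [ioComp_mapOut_image T Sum.inl_injective]
    exact hT wI
  · rintro ⟨T', hT', -⟩
    refine ⟨T'.mapOut (Sum.inl ⁻¹' ·), fun wI => ?_⟩
    rw [ioComp_mapOut_preimage]
    exact hT' wI

/-- with `O' = O ∪ {p}` for a fresh signal `p`, the specification `Lφ` is
realizable iff `⟨Lφ↑, {w : p ∈ w₀}, {p}⟩` is realizable with privacy. -/
theorem realizable_iff_privacy_with_fresh_signal {I O : Type} [Fintype I] [Fintype O]
    (Lφ : Set (Word (Set (I ⊕ O)))) :
    (∃ T : Transd (Set I) (Set O), T.realizes Lφ) ↔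
    (∃ T' : Transd (Set I) (Set (O ⊕ Unit)),
      T'.realizes
        {w | (fun j => (Sum.map id Sum.inl : I ⊕ O → I ⊕ (O ⊕ Unit)) ⁻¹' w j) ∈ Lφ} ∧
      T'.hides {Sum.inr (Sum.inr ())} {w | Sum.inr (Sum.inr ()) ∈ w 0}) :=
  realizable_iff_privacy_with_fresh_signal_general Lφ
end

section
/- Let A = ⟨2^(I∪O), Q, q₀, δ, α⟩ be a nondeterministic Büchi word automaton such that every word in (2^(I∪O))^ω has at least one rejecting run of A. Work over the alphabet 2^(I∪O) × Q, identifying a word over it with w⊕r, where w ∈ (2^(I∪O))^ω, r ∈ Q^ω, and the j-th letter of w⊕r is ⟨w_j, r_{j+1}⟩. Let L_ψ = {w⊕r : q₀·r is an accepting run of A on w}. Consider transducers with input alphabet 2^I × Q and output alphabet 2^O: such a transducer T', on input u = (i₀,q¹)·(i₁,q²)·⋯, produces the computation T'(u) whose j-th letter is ⟨i_j ∪ o_j, q^{j+1}⟩, where o_j is the output of T' after reading (i₀,q¹)⋯(i_j,q^{j+1}). Say T' hides L_ψ if for every input word u there exist r⁺, r⁻ ∈ Q^ω such that w_u⊕r⁺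 ∈ L_ψ and w_u⊕r⁻ ∉ L_ψ, where w_u is the 2^(I∪O)-component of T'(u). Then L(A) is realizable by an (I/O)-transducer if and only if there exists such a transducer T' that hides L_ψ. -/
open Set

/-- The sequence `q₀·r` encoded by a word over `A × Q`: the `Q`-component of the
`j`-th letter is the `(j+1)`-st state. -/
def runOf {A Q : Type} (q0 : Q) (v : Word (A × Q)) : Word Q := fun n =>
  match n with
  | 0 => q0
  | j + 1 => (v j).2

/-- The secret `L_ψ = {w⊕r : q₀·r is an accepting run of A on w}`. -/
def secretLang {I O Q : Type} (A : NBW (Set (I ⊕ O)) Q) :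
    Set (Word (Set (I ⊕ O) × Q)) :=
  {v | A.IsRun (runOf A.q0 v) (fun j => (v j).1) ∧
       (infOcc (runOf A.q0 v) ∩ A.α).Nonempty}

/-- The `2^(I∪O)`-component of the computation of a transducer whose input alphabet is
`2^I × Q` and whose output alphabet is `2^O`. -/
def extComp {I O Q : Type} (T' : Transd (Set I × Q) (Set O)) (u : Word (Set I × Q)) :
    Word (Set (I ⊕ O)) :=
  fun j => Sum.inl '' (u j).1 ∪ Sum.inr '' T'.out u j

/-! Under the hypothesis that every word has a rejecting run, a word `w` admits both an
accepting and a rejecting encoded run `w⊕r` exactly when `w ∈ L(A)`. So `T'` hides `L_ψ` iff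
all its computations lie in `L(A)`, and the extra `Q`-component of the input is irrelevant for
realizability: a transducer can ignore it, and one reading it can be fed a constant state. -/

def Transd.comap {A B C : Type} (T : Transd B C) (f : A → B) : Transd A C :=
  ⟨T.S, T.fintype_S, T.s0, fun s a => T.η s (f a), T.τ⟩

theorem Transd.stateAt_comap {A B C : Type} (T : Transd B C) (f : A → B) (w : Word A) :
    (T.comap f).stateAt w = T.stateAt (f ∘ w) := by
  funext n
  induction n with
  | zero => rfl
  | succ n ih => simp only [Transd.stateAt, ih]; rfl

theorem Transd.out_comap {A B C : Type} (T : Transd B C) (f : A → B) (w : Word A) :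
    (T.comap f).out w = T.out (f ∘ w) := by
  funext j
  simp only [Transd.out, Transd.stateAt_comap]
  rfl

theorem extComp_comap_fst {I O Q : Type} (T : Transd (Set I) (Set O)) (u : Word (Set I × Q)) :
    extComp (T.comap Prod.fst) u = ioComp T (Prod.fst ∘ u) := by
  funext j
  simp only [extComp, ioComp, Transd.out_comap]
  rfl

theorem ioComp_comap_pair {I O Q : Type} (T' : Transd (Set I × Q) (Set O)) (q : Q)
    (wI : Word (Set I)) :
    ioComp (T'.comap (·, q)) wI = extComp T' (fun j => (wI j, q)) := by
  funext j
  simp only [extComp, ioComp, Transd.out_comap]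
  rfl

theorem realizable_iff_exists_extComp_mem {I O Q : Type} [Nonempty Q]
    (L : Set (Word (Set (I ⊕ O)))) :
    (∃ T : Transd (Set I) (Set O), ∀ wI, ioComp T wI ∈ L) ↔
      ∃ T' : Transd (Set I × Q) (Set O), ∀ u, extComp T' u ∈ L := by
  constructor
  · rintro ⟨T, hT⟩
    exact ⟨T.comap Prod.fst, fun u => extComp_comap_fst T u ▸ hT _⟩
  · rintro ⟨T', hT'⟩
    obtain ⟨q⟩ := ‹Nonempty Q›
    exact ⟨T'.comap (·, q), fun wI => ioComp_comap_pair T' q wI ▸ hT' _⟩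

theorem runOf_tail {A Q : Type} {q0 : Q} {r : Word Q} (hr : r 0 = q0) (w : Word A) :
    runOf q0 (fun j => (w j, r (j + 1))) = r := by
  funext n
  cases n with
  | zero => exact hr.symm
  | succ n => rfl

theorem mem_secretLang_tail_iff {I O Q : Type} (A : NBW (Set (I ⊕ O)) Q)
    {w : Word (Set (I ⊕ O))} {r : Word Q} (hr : A.IsRun r w) :
    (fun j => (w j, r (j + 1))) ∈ secretLang A ↔ (infOcc r ∩ A.α).Nonempty := by
  simp only [secretLang, mem_ofPred_eq, runOf_tail hr.1 w]
  exact and_iff_right hr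

theorem NBW.mem_lang_of_mem_secretLang {I O Q : Type} (A : NBW (Set (I ⊕ O)) Q)
    {w : Word (Set (I ⊕ O))} {r : Word Q} (h : (fun j => (w j, r j)) ∈ secretLang A) :
    w ∈ A.lang :=
  ⟨_, h⟩

theorem exists_hiding_runs_iff_mem_lang {I O Q : Type} (A : NBW (Set (I ⊕ O)) Q)
    {w : Word (Set (I ⊕ O))} (hrej : ∃ r, A.IsRun r w ∧ ¬(infOcc r ∩ A.α).Nonempty) :
    (∃ rp rm : Word Q, (fun j => (w j, rp j)) ∈ secretLang A ∧
        (fun j => (w j, rm j)) ∉ secretLang A) ↔ w ∈ A.lang := by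
  constructor
  · rintro ⟨rp, -, hrp, -⟩
    exact A.mem_lang_of_mem_secretLang hrp
  · rintro ⟨r, hr, hacc⟩
    obtain ⟨r', hr', hrej'⟩ := hrej
    exact ⟨fun j => r (j + 1), fun j => r' (j + 1), (mem_secretLang_tail_iff A hr).2 hacc,
      fun h => hrej' ((mem_secretLang_tail_iff A hr').1 h)⟩

theorem nbw_realizable_iff_hiding_general {I O Q : Type}
    (A : NBW (Set (I ⊕ O)) Q)
    (hrej : ∀ w : Word (Set (I ⊕ O)), ∃ r, A.IsRun r w ∧ ¬(infOcc r ∩ A.α).Nonempty) :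
    (∃ T : Transd (Set I) (Set O), ∀ wI, ioComp T wI ∈ A.lang) ↔
    (∃ T' : Transd (Set I × Q) (Set O), ∀ u : Word (Set I × Q),
      ∃ rp rm : Word Q,
        (fun j => (extComp T' u j, rp j)) ∈ secretLang A ∧
        (fun j => (extComp T' u j, rm j)) ∉ secretLang A) := by
  have : Nonempty Q := ⟨A.q0⟩
  rw [realizable_iff_exists_extComp_mem (Q := Q)]
  exact exists_congr fun T' => forall_congr' fun u =>
    (exists_hiding_runs_iff_mem_lang A (hrej _)).symm

/-- `L(A)` is realizable iff some transducer with input alphabet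
`2^I × Q` hides the secret `L_ψ`. -/
theorem nbw_realizable_iff_hiding {I O Q : Type} [Fintype I] [Fintype O] [Fintype Q]
    (A : NBW (Set (I ⊕ O)) Q)
    (hrej : ∀ w : Word (Set (I ⊕ O)), ∃ r, A.IsRun r w ∧ ¬(infOcc r ∩ A.α).Nonempty) :
    (∃ T : Transd (Set I) (Set O), ∀ wI, ioComp T wI ∈ A.lang) ↔
    (∃ T' : Transd (Set I × Q) (Set O), ∀ u : Word (Set I × Q),
      ∃ rp rm : Word Q,
        (fun j => (extComp T' u j, rp j)) ∈ secretLang A ∧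
        (fun j => (extComp T' u j, rm j)) ∉ secretLang A) :=
  nbw_realizable_iff_hiding_general A hrej
end

section
/- Let I = ∅ and let A_φ and A_ψ be nondeterministic Büchi word automata over Σ = 2^O, and let H ⊆ O. Then ⟨L(A_φ), L(A_ψ), H⟩ is realizable with privacy (by (∅/O)-transducers, which have a single input word and hence a single computation) if and only if L(A_φ) ∩ noise_H(L(A_ψ)) ∩ noise_H(Σ^ω ∖ L(A_ψ)) ≠ ∅, where noise_H(L) = ⋃_{w ∈ L} noise_H(w). Equivalently, if and only if there exists a word w ∈ L(A_φ) and words w⁺, w⁻ ∈ noise_H(w) with w⁺ ∈ L(A_ψ) and w⁻ ∉ L(A_ψ). -/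
/-!
A closed transducer has a single computation, and the words it can compute are exactly the
ultimately periodic ones; so the point is to replace an arbitrary witness `w, w⁺, w⁻` by an
ultimately periodic one. Colour each pair `i < j` by the transition profiles (which states
are joined by a path over the segment, and whether through an accepting state) of `A_φ` on
`w[i, j)` and of `A_ψ` on `w⁺[i, j)` and `w⁻[i, j)`. Ramsey's theorem gives a factorization
`0 = g₀ < g₁ < g₂ < ⋯` whose blocks after the first all have the same colour. Membership in
the language of an NBW only depends on the profiles of the blocks of a factorization, so
passing from each word `u x₁ x₂ ⋯` to the lasso `u x₁ x₁ ⋯` keeps `w ∈ L(A_φ)`,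
`w⁺ ∈ L(A_ψ)` and `w⁻ ∉ L(A_ψ)`; the noise relation is letterwise and survives as well.
-/

open Set

/-- In the closed setting (`I = ∅`), the computation of a transducer consists of its
outputs only. -/
def closedComp {O : Type} (T : Transd (Set Empty) (Set O)) (wI : Word (Set Empty)) :
    Word (Set O) :=
  fun j => T.out wI j

/-- `⟨Lφ, Lψ, H⟩` is realizable with privacy by a closed (`(∅/O)`-) transducer. -/
def closedRealizableWithPrivacy {O : Type} (Lφ Lψ : Set (Word (Set O)))
    (H : Set O) : Prop :=
  ∃ T : Transd (Set Empty) (Set O),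
    (∀ wI, closedComp T wI ∈ Lφ) ∧
    (∀ wI, ∃ wp ∈ noiseW H (closedComp T wI), ∃ wm ∈ noiseW H (closedComp T wI),
      wp ∈ Lψ ∧ wm ∉ Lψ)

open Filter

theorem exists_ramsey_factorization {C : Type} [Finite C] (f : ℕ → ℕ → C) :
    ∃ g : ℕ → ℕ, StrictMono g ∧ g 0 = 0 ∧ ∃ c, ∀ i, f (g (i + 1)) (g (i + 2)) = c := by
  set U := hyperfilter ℕ
  have hcolour : ∀ i, ∃ c, ∀ᶠ j in (U : Filter ℕ), f i j = c := fun i =>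
    U.eventually_exists_iff.1 (.of_forall fun j => ⟨f i j, rfl⟩)
  choose col hcol using hcolour
  obtain ⟨c, hc⟩ : ∃ c, ∀ᶠ i in (U : Filter ℕ), col i = c :=
    U.eventually_exists_iff.1 (.of_forall fun i => ⟨col i, rfl⟩)
  have hnext : ∀ i, ∃ j, i < j ∧ col j = c ∧ f i j = col i := fun i =>
    (((eventually_gt_atTop i).filter_mono Nat.hyperfilter_le_atTop).and
      (hc.and (hcol i))).exists
  choose next hlt hcol_next hf_next using hnext
  refine ⟨fun k => next^[k] 0, strictMono_nat_of_lt_succ fun k => ?_, rfl, c, fun i => ?_⟩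
  · rw [Function.iterate_succ_apply']
    exact hlt _
  · simp only [Function.iterate_succ_apply']
    rw [hf_next, hcol_next]

namespace StrictMono

variable {σ : ℕ → ℕ}

theorem exists_block (hσ : StrictMono σ) (h0 : σ 0 = 0) (n : ℕ) :
    ∃ k, σ k ≤ n ∧ n < σ (k + 1) := by
  have h : ∃ k, n < σ (k + 1) := ⟨n, (Nat.lt_succ_self n).trans_le hσ.le_apply⟩
  refine ⟨Nat.find h, ?_, Nat.find_spec h⟩
  rcases hk : Nat.find h with _ | k
  · simp [h0]
  · exact not_lt.1 (Nat.find_min h (hk ▸ k.lt_succ_self))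

theorem block_unique (hσ : StrictMono σ) {k l n : ℕ} (hk : σ k ≤ n) (hk' : n < σ (k + 1))
    (hl : σ l ≤ n) (hl' : n < σ (l + 1)) : k = l := by
  have := hσ.lt_iff_lt.1 (hk.trans_lt hl')
  have := hσ.lt_iff_lt.1 (hl.trans_lt hk')
  omega

end StrictMono

-- `u ∘ lassoIndex m p` is the lasso `u[0, m) u[m, m + p) u[m, m + p) ⋯`.
def lassoIndex (m p n : ℕ) : ℕ := if n < m then n else m + (n - m) % p

def lassoBlock (m p : ℕ) : ℕ → ℕ
  | 0 => 0
  | k + 1 => m + k * p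

section Lasso

variable {m p : ℕ}

theorem lassoIndex_of_lt {n : ℕ} (h : n < m) : lassoIndex m p n = n := if_pos h

theorem lassoIndex_add_mul_add (k : ℕ) {t : ℕ} (ht : t < p) :
    lassoIndex m p (m + k * p + t) = m + t := by
  rw [lassoIndex, if_neg (by omega), show m + k * p + t - m = t + p * k by ring_nf; omega,
    Nat.add_mul_mod_self_left, Nat.mod_eq_of_lt ht]

theorem lassoIndex_lt (hp : 0 < p) (n : ℕ) : lassoIndex m p n < m + p := by
  unfold lassoIndex
  split_ifs
  · omega
  · have := Nat.mod_lt (n - m) hp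
    omega

theorem lassoIndex_zero : lassoIndex m p 0 = 0 := by
  unfold lassoIndex
  split_ifs <;> simp_all

theorem lassoIndex_lassoIndex_add_one (n : ℕ) :
    lassoIndex m p (lassoIndex m p n + 1) = lassoIndex m p (n + 1) := by
  rcases lt_or_ge n m with h | h
  · rw [lassoIndex_of_lt h]
  · simp only [lassoIndex, if_neg (not_lt.2 h), if_neg (show ¬m + (n - m) % p + 1 < m by omega),
      if_neg (show ¬n + 1 < m by omega)]
    rw [show m + (n - m) % p + 1 - m = (n - m) % p + 1 by omega, Nat.mod_add_mod,
      show n + 1 - m = n - m + 1 by omega]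

theorem lassoBlock_strictMono (hm : 0 < m) (hp : 0 < p) : StrictMono (lassoBlock m p) :=
  strictMono_nat_of_lt_succ fun k => by
    cases k <;> simp only [lassoBlock, add_mul, one_mul] <;> omega

end Lasso

theorem mem_infOcc_iff {Q : Type} {r : Word Q} {q : Q} :
    q ∈ infOcc r ↔ ∃ᶠ n in atTop, r n = q :=
  frequently_atTop.symm

theorem infOcc_inter_nonempty {Q : Type} [Finite Q] {r : Word Q} {s : Set Q}
    (h : ∃ᶠ n in atTop, r n ∈ s) : (infOcc r ∩ s).Nonempty := by
  obtain ⟨q, hq⟩ := frequently_exists.1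
    (h.mono fun n hn => ⟨⟨r n, hn⟩, rfl⟩ : ∃ᶠ n in atTop, ∃ q : s, r n = q)
  exact ⟨q, mem_infOcc_iff.2 hq, q.2⟩

namespace NBW

variable {A Q : Type} (N : NBW A Q)

def profile (v : Word A) (d : ℕ) : Set (Q × Q × Bool) :=
  {x | ∃ r : Word Q, r 0 = x.1 ∧ r d = x.2.1 ∧ (∀ t < d, r (t + 1) ∈ N.δ (r t) (v t)) ∧
    (x.2.2 = true → ∃ t ≤ d, r t ∈ N.α)}

def segProfile (w : Word A) (i j : ℕ) : Set (Q × Q × Bool) :=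
  N.profile (fun t => w (i + t)) (j - i)

theorem profile_congr {v v' : Word A} {d : ℕ} (h : ∀ t < d, v t = v' t) :
    N.profile v d = N.profile v' d := by
  ext x
  refine exists_congr fun r => and_congr_right' (and_congr_right' (and_congr_left' ?_))
  exact forall₂_congr fun t ht => by rw [h t ht]

theorem mem_lang_iff_frequently [Finite Q] {w : Word A} :
    w ∈ N.lang ↔ ∃ r, N.IsRun r w ∧ ∃ᶠ n in atTop, r n ∈ N.α :=
  exists_congr fun _ => and_congr_right' ⟨fun ⟨_, hq, hα⟩ =>
    (mem_infOcc_iff.1 hq).mono fun _ hn => hn ▸ hα, infOcc_inter_nonempty⟩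

theorem exists_blocks_of_mem_lang {σ : ℕ → ℕ} (hσ : StrictMono σ) (h0 : σ 0 = 0)
    {w : Word A} (hw : w ∈ N.lang) :
    ∃ (q : ℕ → Q) (b : ℕ → Bool), q 0 = N.q0 ∧
      (∀ k, (q k, q (k + 1), b k) ∈ N.segProfile w (σ k) (σ (k + 1))) ∧
      ∃ᶠ k in atTop, b k = true := by
  classical
  obtain ⟨r, ⟨hr0, hr⟩, q, hq, hqα⟩ := hw
  refine ⟨fun k => r (σ k), fun k => decide (∃ t ≤ σ (k + 1) - σ k, r (σ k + t) ∈ N.α),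
    by simp only [h0, hr0], fun k => ⟨fun t => r (σ k + t), rfl, ?_, fun t _ => hr _,
      of_decide_eq_true⟩, frequently_atTop.2 fun K => ?_⟩
  · simp only [Nat.add_sub_cancel' (hσ.monotone k.le_succ)]
  · obtain ⟨n, hn, rfl⟩ := hq (σ K)
    obtain ⟨k, hk, hk'⟩ := hσ.exists_block h0 n
    refine ⟨k, Nat.lt_succ_iff.1 (hσ.lt_iff_lt.1 (hn.trans_lt hk')),
      decide_eq_true ⟨n - σ k, by omega, ?_⟩⟩
    rwa [Nat.add_sub_cancel' hk]

theorem mem_lang_of_exists_blocks [Finite Q] {σ : ℕ → ℕ} (hσ : StrictMono σ) (h0 : σ 0 = 0)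
    {w : Word A} {q : ℕ → Q} {b : ℕ → Bool} (hq0 : q 0 = N.q0)
    (hq : ∀ k, (q k, q (k + 1), b k) ∈ N.segProfile w (σ k) (σ (k + 1)))
    (hb : ∃ᶠ k in atTop, b k = true) : w ∈ N.lang := by
  choose s hs0 hsd hstep hacc using hq
  choose blk hblk using hσ.exists_block h0
  set r : Word Q := fun n => s (blk n) (n - σ (blk n))
  have hr : ∀ k t, t ≤ σ (k + 1) - σ k → r (σ k + t) = s k t := by
    intro k t ht
    rcases ht.lt_or_eq with ht | rfl
    · have hk : blk (σ k + t) = k :=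
        hσ.block_unique (hblk _).1 (hblk _).2 (Nat.le_add_right _ _) (by omega)
      simp only [r, hk, Nat.add_sub_cancel_left]
    · -- the end of block `k` is the start of block `k + 1`; both paths are in `q (k + 1)` there
      simp only [r, Nat.add_sub_cancel' (hσ.monotone k.le_succ), hsd]
      rw [hσ.block_unique (hblk _).1 (hblk _).2 le_rfl (hσ (k + 1).lt_succ_self), Nat.sub_self,
        hs0]
  refine N.mem_lang_iff_frequently.2 ⟨r, ⟨?_, fun n => ?_⟩, frequently_atTop.2 fun K => ?_⟩
  · simpa [h0, hs0, hq0] using hr 0 0 (Nat.zero_le _)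
  · obtain ⟨k, hk, hk'⟩ := hσ.exists_block h0 n
    obtain ⟨t, rfl⟩ := Nat.exists_eq_add_of_le hk
    rw [hr k t (by omega), show σ k + t + 1 = σ k + (t + 1) from rfl, hr k (t + 1) (by omega)]
    exact hstep k t (by omega)
  · obtain ⟨k, hkK, hbk⟩ := frequently_atTop.1 hb K
    obtain ⟨t, ht, hα⟩ := hacc k hbk
    exact ⟨σ k + t, hkK.trans (hσ.le_apply.trans (Nat.le_add_right _ _)), hr k t ht ▸ hα⟩

theorem mem_lang_of_segProfile_eq [Finite Q] {σ τ : ℕ → ℕ} (hσ : StrictMono σ) (hτ : StrictMono τ)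
    (hσ0 : σ 0 = 0) (hτ0 : τ 0 = 0) {x y : Word A}
    (h : ∀ k, N.segProfile x (σ k) (σ (k + 1)) = N.segProfile y (τ k) (τ (k + 1)))
    (hx : x ∈ N.lang) : y ∈ N.lang :=
  let ⟨_, _, hq0, hq, hb⟩ := N.exists_blocks_of_mem_lang hσ hσ0 hx
  N.mem_lang_of_exists_blocks hτ hτ0 hq0 (fun k => h k ▸ hq k) hb

theorem comp_lassoIndex_mem_lang_iff [Finite Q] {σ : ℕ → ℕ} (hσ : StrictMono σ) (h0 : σ 0 = 0)
    {u : Word A}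
    (hconst : ∀ k, N.segProfile u (σ (k + 1)) (σ (k + 2)) = N.segProfile u (σ 1) (σ 2)) :
    u ∘ lassoIndex (σ 1) (σ 2 - σ 1) ∈ N.lang ↔ u ∈ N.lang := by
  set m := σ 1
  set p := σ 2 - σ 1
  have hm : 0 < m := h0 ▸ hσ zero_lt_one
  have hp : 0 < p := Nat.sub_pos_of_lt (hσ one_lt_two)
  have h : ∀ k, N.segProfile (u ∘ lassoIndex m p) (lassoBlock m p k) (lassoBlock m p (k + 1)) =
      N.segProfile u (σ k) (σ (k + 1)) := by
    rintro (_ | k)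
    · simp only [segProfile, lassoBlock, h0, zero_mul, add_zero, zero_add, Nat.sub_zero]
      exact N.profile_congr fun t ht => congrArg u (lassoIndex_of_lt ht)
    · rw [hconst k]
      simp only [segProfile, lassoBlock, show m + (k + 1) * p - (m + k * p) = p by
        rw [add_mul, one_mul]; omega]
      exact N.profile_congr fun t ht => congrArg u (lassoIndex_add_mul_add k ht)
  exact ⟨N.mem_lang_of_segProfile_eq (lassoBlock_strictMono hm hp) hσ rfl h0 h,
    N.mem_lang_of_segProfile_eq hσ (lassoBlock_strictMono hm hp) h0 rfl fun k => (h k).symm⟩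

end NBW

-- The initial state is never output: the `j`-th output is taken after reading `j + 1` letters.
theorem Transd.exists_out_eq_iterate {Ain Aout S : Type} [Fintype S] (f : S → S) (s : S)
    (o : S → Aout) : ∃ T : Transd Ain Aout, ∀ w j, T.out w j = o (f^[j] s) := by
  let T : Transd Ain Aout :=
    ⟨Option S, inferInstance, none, fun x _ => some (x.elim s f), fun x => x.elim (o s) o⟩
  have hstate : ∀ w j, T.stateAt w j = some (f^[j] s) := by
    intro w j
    induction j with
    | zero => rfl
    | succ j ih => rw [Transd.stateAt, ih, Function.iterate_succ_apply']; rfl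
  exact ⟨T, fun w j => by rw [Transd.out, hstate]; rfl⟩

theorem exists_closedComp_eq_comp_lassoIndex {O : Type} (u : Word (Set O)) (m : ℕ) {p : ℕ}
    (hp : 0 < p) :
    ∃ T : Transd (Set Empty) (Set O), ∀ wI, closedComp T wI = u ∘ lassoIndex m p := by
  set f : Fin (m + p) → Fin (m + p) := fun i => ⟨lassoIndex m p (i + 1), lassoIndex_lt hp _⟩
  have hf : ∀ j, (f^[j] ⟨0, by omega⟩ : ℕ) = lassoIndex m p j := by
    intro j
    induction j with
    | zero => exact lassoIndex_zero.symm
    | succ j ih =>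
      rw [Function.iterate_succ_apply']
      simp only [f, ih]
      exact lassoIndex_lassoIndex_add_one j
  obtain ⟨T, hT⟩ := Transd.exists_out_eq_iterate (Ain := Set Empty) f ⟨0, by omega⟩ (fun i => u i)
  exact ⟨T, fun wI => funext fun j => (hT wI j).trans (congrArg u (hf j))⟩

section Privacy

variable {O : Type} (Lφ Lψ : Set (Word (Set O))) (H : Set O)

def IsPrivacyWitness (w : Word (Set O)) : Prop :=
  w ∈ Lφ ∧ ∃ wp ∈ noiseW H w, ∃ wm ∈ noiseW H w, wp ∈ Lψ ∧ wm ∉ Lψ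

theorem mem_noiseW_comm {w w' : Word (Set O)} : w' ∈ noiseW H w ↔ w ∈ noiseW H w' :=
  forall_congr' fun _ => eq_comm

theorem comp_mem_noiseW {w w' : Word (Set O)} (h : w' ∈ noiseW H w) (ρ : ℕ → ℕ) :
    w' ∘ ρ ∈ noiseW H (w ∘ ρ) :=
  fun j => h (ρ j)

theorem exists_isPrivacyWitness_iff_nonempty :
    (∃ w, IsPrivacyWitness Lφ Lψ H w) ↔
      (Lφ ∩ (⋃ w ∈ Lψ, noiseW H w) ∩ (⋃ w ∈ Lψᶜ, noiseW H w)).Nonempty := by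
  simp only [Set.Nonempty, Set.mem_inter_iff, Set.mem_iUnion, exists_prop, Set.mem_compl_iff,
    IsPrivacyWitness, mem_noiseW_comm H (w := _)]
  constructor
  · rintro ⟨w, hw, wp, hwp, wm, hwm, hp, hm⟩
    exact ⟨w, ⟨hw, wp, hp, hwp⟩, wm, hm, hwm⟩
  · rintro ⟨w, ⟨hw, wp, hp, hwp⟩, wm, hm, hwm⟩
    exact ⟨w, hw, wp, hwp, wm, hwm, hp, hm⟩

theorem exists_isPrivacyWitness_of_closedRealizableWithPrivacy
    (h : closedRealizableWithPrivacy Lφ Lψ H) : ∃ w, IsPrivacyWitness Lφ Lψ H w :=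
  let ⟨_, hφ, hψ⟩ := h
  ⟨_, hφ fun _ => ∅, hψ _⟩

theorem closedRealizableWithPrivacy_of_isPrivacyWitness_comp_lassoIndex {u : Word (Set O)}
    {m p : ℕ} (hp : 0 < p) (h : IsPrivacyWitness Lφ Lψ H (u ∘ lassoIndex m p)) :
    closedRealizableWithPrivacy Lφ Lψ H :=
  let ⟨T, hT⟩ := exists_closedComp_eq_comp_lassoIndex u m hp
  ⟨T, fun wI => hT wI ▸ h.1, fun wI => hT wI ▸ h.2⟩

end Privacy

theorem NBW.exists_isPrivacyWitness_comp_lassoIndex {O Qφ Qψ : Type} [Finite Qφ] [Finite Qψ]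
    (Aφ : NBW (Set O) Qφ) (Aψ : NBW (Set O) Qψ) (H : Set O) {w : Word (Set O)}
    (hw : IsPrivacyWitness Aφ.lang Aψ.lang H w) :
    ∃ m p, 0 < p ∧ IsPrivacyWitness Aφ.lang Aψ.lang H (w ∘ lassoIndex m p) := by
  obtain ⟨hwφ, wp, hwp, wm, hwm, hpψ, hmψ⟩ := hw
  obtain ⟨σ, hσ, h0, c, hc⟩ := exists_ramsey_factorization fun i j =>
    (Aφ.segProfile w i j, Aψ.segProfile wp i j, Aψ.segProfile wm i j)
  have hconst := fun k => (hc k).trans (hc 0).symm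
  exact ⟨σ 1, σ 2 - σ 1, Nat.sub_pos_of_lt (hσ one_lt_two),
    (Aφ.comp_lassoIndex_mem_lang_iff hσ h0 fun k => congrArg Prod.fst (hconst k)).2 hwφ,
    _, comp_mem_noiseW H hwp _, _, comp_mem_noiseW H hwm _,
    (Aψ.comp_lassoIndex_mem_lang_iff hσ h0 fun k => congrArg (·.2.1) (hconst k)).2 hpψ,
    (Aψ.comp_lassoIndex_mem_lang_iff hσ h0 fun k => congrArg (·.2.2) (hconst k)).not.2 hmψ⟩

theorem closed_privacy_iff_nonempty_general {O Qφ Qψ : Type} [Fintype Qφ]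
    [Fintype Qψ] (Aφ : NBW (Set O) Qφ) (Aψ : NBW (Set O) Qψ) (H : Set O) :
    (closedRealizableWithPrivacy Aφ.lang Aψ.lang H ↔
      (Aφ.lang ∩ (⋃ w ∈ Aψ.lang, noiseW H w) ∩
        (⋃ w ∈ (Aψ.lang)ᶜ, noiseW H w)).Nonempty) ∧
    (closedRealizableWithPrivacy Aφ.lang Aψ.lang H ↔
      ∃ w ∈ Aφ.lang, ∃ wp ∈ noiseW H w, ∃ wm ∈ noiseW H w,
        wp ∈ Aψ.lang ∧ wm ∉ Aψ.lang) := by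
  have key : closedRealizableWithPrivacy Aφ.lang Aψ.lang H ↔
      ∃ w, IsPrivacyWitness Aφ.lang Aψ.lang H w := by
    refine ⟨exists_isPrivacyWitness_of_closedRealizableWithPrivacy _ _ _, fun ⟨w, hw⟩ => ?_⟩
    obtain ⟨m, p, hp, hlasso⟩ := Aφ.exists_isPrivacyWitness_comp_lassoIndex Aψ H hw
    exact closedRealizableWithPrivacy_of_isPrivacyWitness_comp_lassoIndex _ _ _ hp hlasso
  exact ⟨key.trans (exists_isPrivacyWitness_iff_nonempty _ _ _), key⟩

/-- in the closed setting, realizability with privacy reduces to the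
nonemptiness of `L(Aφ) ∩ noise_H(L(Aψ)) ∩ noise_H(Σ^ω ∖ L(Aψ))`. -/
theorem closed_privacy_iff_nonempty {O Qφ Qψ : Type} [Fintype O] [Fintype Qφ]
    [Fintype Qψ] (Aφ : NBW (Set O) Qφ) (Aψ : NBW (Set O) Qψ) (H : Set O) :
    (closedRealizableWithPrivacy Aφ.lang Aψ.lang H ↔
      (Aφ.lang ∩ (⋃ w ∈ Aψ.lang, noiseW H w) ∩
        (⋃ w ∈ (Aψ.lang)ᶜ, noiseW H w)).Nonempty) ∧
    (closedRealizableWithPrivacy Aφ.lang Aψ.lang H ↔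
      ∃ w ∈ Aφ.lang, ∃ wp ∈ noiseW H w, ∃ wm ∈ noiseW H w,
        wp ∈ Aψ.lang ∧ wm ∉ Aψ.lang) :=
  closed_privacy_iff_nonempty_general Aφ Aψ H
end

section
/- Let G = (V,E) be an undirected graph with nonempty edge set E = {e₁,…,e_m} (m ≥ 1, each e_i a set of two distinct vertices). Take I = ∅ and O = V. Let L_φ = {∅^ω} ⊆ (2^V)^ω and L_ψ = {w ∈ (2^V)^ω : for all 1 ≤ i ≤ m, w_{i-1} ∩ e_i ≠ ∅}. Then for every H ⊆ V: ⟨L_φ, L_ψ, H⟩ is realizable with privacy if and only if H is a vertex cover of G (i.e., H ∩ e ≠ ∅ for every e ∈ E). Consequently, G has a vertex cover of size at most k if and only if there exists H ⊆ V with |H| ≤ k such that ⟨L_φ, L_ψ, H⟩ is realizable with privacy. -/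
open Set

/-- with `L_φ = {∅^ω}` and the secret `L_ψ` encoding the edges of a
graph, realizability with privacy characterizes vertex covers; consequently,
vertex covers of size at most `k` correspond to hiding sets of size at most `k`. -/
theorem vertex_cover_iff_privacy {V : Type} [Fintype V]
    (m : ℕ) (hm : 1 ≤ m) (e : Fin m → Set V)
    (he : ∀ i, ∃ u v : V, u ≠ v ∧ e i = {u, v}) (k : ℕ) :
    (∀ H : Set V,
      closedRealizableWithPrivacy {w | w = fun _ => (∅ : Set V)}
        {w : Word (Set V) | ∀ i : Fin m, (w i.1 ∩ e i).Nonempty} H ↔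
      ∀ i : Fin m, (H ∩ e i).Nonempty) ∧
    ((∃ S : Set V, S.ncard ≤ k ∧ ∀ i : Fin m, (S ∩ e i).Nonempty) ↔
      (∃ H : Set V, H.ncard ≤ k ∧
        closedRealizableWithPrivacy {w | w = fun _ => (∅ : Set V)}
          {w : Word (Set V) | ∀ i : Fin m, (w i.1 ∩ e i).Nonempty} H)) := by
  have main : ∀ H : Set V,
      closedRealizableWithPrivacy {w | w = fun _ => (∅ : Set V)}
        {w : Word (Set V) | ∀ i : Fin m, (w i.1 ∩ e i).Nonempty} H ↔
      ∀ i : Fin m, (H ∩ e i).Nonempty := by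
    intro H
    constructor
    · rintro ⟨T, hφ, hpriv⟩ i
      obtain ⟨wp, hwp, wm, hwm, hpψ, hmψ⟩ := hpriv (fun _ => ∅)
      have hc : closedComp T (fun _ => ∅) = fun _ => (∅ : Set V) := hφ (fun _ => ∅)
      rw [hc] at hwp
      have h1 := hwp i.1
      obtain ⟨x, hx1, hx2⟩ := hpψ i
      refine ⟨x, ?_, hx2⟩
      by_contra hxH
      have hx : x ∈ wp i.1 ∩ Hᶜ := ⟨hx1, hxH⟩
      rw [h1] at hx
      exact hx.1
    · intro hcov
      refine ⟨⟨Unit, inferInstance, (), fun _ _ => (), fun _ => ∅⟩, ?_, ?_⟩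
      · intro wI
        show closedComp _ wI = fun _ => (∅ : Set V)
        funext j
        induction j with
        | zero => rfl
        | succ n ih => rfl
      · intro wI
        have hc : ∀ j, closedComp ⟨Unit, inferInstance, (), fun _ _ => (), fun _ => ∅⟩ wI j = (∅ : Set V) := fun j => rfl
        refine ⟨fun _ => H, fun j => by simp [hc], closedComp _ wI, fun j => rfl, fun i => hcov i, ?_⟩
        intro hcon
        obtain ⟨x, hx1, _⟩ := hcon ⟨0, hm⟩
        rw [hc 0] at hx1
        exact hx1
  refine ⟨main, ?_⟩
  constructor
  · rintro ⟨S, hS, hScov⟩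
    exact ⟨S, hS, (main S).mpr hScov⟩
  · rintro ⟨H, hH, hreal⟩
    exact ⟨H, hH, (main H).mp hreal⟩
end

section
/- Let AP be a finite set of atomic propositions, A ⊆ AP, p ∉ AP, and let L_θ ⊆ (2^AP)^ω be any language. Set I = AP∖A, O = H = A ∪ {p}, and L_ψ = {w ∈ (2^(AP∪{p}))^ω : w|_AP ∈ L_θ or p ∈ w₀}, where w|_AP is the letterwise restriction of w to AP. Then the following are equivalent: (i) there is no w ∈ (2^AP)^ω such that every w' ∈ noise_A(w) belongs to L_θ (i.e., the universally quantified statement ∀A θ is unsatisfiable); (ii) every (I/O)-transducer H-hides L_ψ; (iii) some (I/O)-transducer with a single state H-hides L_ψ. -/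
/-!
The visible signals `AP ∖ A` are exactly the inputs, so the noise set of a computation
depends only on the input word and, restricted to `AP`, is the `A`-noise of that word.
A noisy word that raises `p` is always in the secret, so a transducer hides `L_ψ` iff the
`A`-noise of every input word leaves `L_θ`, which is the unsatisfiability of `∀A θ`;
in particular this does not depend on the transducer.
-/

open Set

/-- Here `I = AP ∖ A` and `O = A ∪ {p}`, where the fresh signal `p` is `Sum.inr ()` in
the signal type `AP ⊕ Unit`.  The computation of a transducer, as a word over
`2^(AP ∪ {p})`. -/
def comp7 {AP : Type} (A : Set AP)
    (T : Transd (Set {x : AP // x ∉ A}) (Set ({x : AP // x ∈ A} ⊕ Unit)))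
    (wI : Word (Set {x : AP // x ∉ A})) : Word (Set (AP ⊕ Unit)) :=
  fun j =>
    (fun x : {x : AP // x ∉ A} => (Sum.inl x.val : AP ⊕ Unit)) '' wI j ∪
    (Sum.elim (fun a : {x : AP // x ∈ A} => (Sum.inl a.val : AP ⊕ Unit))
      (fun _ => Sum.inr ())) '' T.out wI j

/-- The hidden signals `H = A ∪ {p}`. -/
def hiddenSet {AP : Type} (A : Set AP) : Set (AP ⊕ Unit) :=
  (Sum.inl '' A) ∪ {Sum.inr ()}

/-- The secret `L_ψ = {w : w|_AP ∈ L_θ or p ∈ w₀}`. -/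
def secret7 {AP : Type} (Lθ : Set (Word (Set AP))) : Set (Word (Set (AP ⊕ Unit))) :=
  {w | (fun j => Sum.inl ⁻¹' w j) ∈ Lθ ∨ Sum.inr () ∈ w 0}

/-- `T` `H`-hides the secret `L_ψ`. -/
def hides7 {AP : Type} (A : Set AP) (Lθ : Set (Word (Set AP)))
    (T : Transd (Set {x : AP // x ∉ A}) (Set ({x : AP // x ∈ A} ⊕ Unit))) : Prop :=
  ∀ wI, ∃ wp ∈ noiseW (hiddenSet A) (comp7 A T wI),
    ∃ wm ∈ noiseW (hiddenSet A) (comp7 A T wI),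
      wp ∈ secret7 Lθ ∧ wm ∉ secret7 Lθ

lemma mem_noiseW_iff {B : Type} {H : Set B} {w w' : Word (Set B)} :
    w' ∈ noiseW H w ↔ ∀ j, ∀ z ∉ H, (z ∈ w' j ↔ z ∈ w j) := by
  simp only [noiseW, mem_ofPred_eq, Set.ext_iff, mem_inter_iff, mem_compl_iff]
  exact forall_congr' fun j => ⟨fun h z hz => by simpa [hz] using h z,
    fun h z => by by_cases hz : z ∈ H <;> simp [hz, h]⟩

lemma self_mem_noiseW {B : Type} (H : Set B) (w : Word (Set B)) : w ∈ noiseW H w :=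
  fun _ => rfl

lemma noiseW_congr {B : Type} {H : Set B} {w₁ w₂ : Word (Set B)}
    (h : ∀ j, w₁ j ∩ Hᶜ = w₂ j ∩ Hᶜ) : noiseW H w₁ = noiseW H w₂ := by
  ext w'
  simp only [noiseW, mem_ofPred_eq, h]

section Hiding

variable {AP : Type} {A : Set AP}

def inputWord (A : Set AP) (wI : Word (Set {x : AP // x ∉ A})) : Word (Set AP) :=
  fun j => Subtype.val '' wI j

lemma inputWord_preimage_inter_compl (w : Word (Set AP)) (j : ℕ) :
    inputWord A (fun j => Subtype.val ⁻¹' w j) j ∩ Aᶜ = w j ∩ Aᶜ := by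
  simp only [inputWord, image_preimage_eq_inter_range, Subtype.range_coe_subtype]
  ext x
  simp

lemma inl_mem_hiddenSet {x : AP} : (Sum.inl x : AP ⊕ Unit) ∈ hiddenSet A ↔ x ∈ A := by
  simp [hiddenSet]

lemma inr_mem_hiddenSet : (Sum.inr () : AP ⊕ Unit) ∈ hiddenSet A := by
  simp [hiddenSet]

lemma inl_mem_comp7_iff {T : Transd (Set {x : AP // x ∉ A}) (Set ({x : AP // x ∈ A} ⊕ Unit))}
    {wI : Word (Set {x : AP // x ∉ A})} {j : ℕ} {x : AP} (hx : x ∉ A) :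
    (Sum.inl x : AP ⊕ Unit) ∈ comp7 A T wI j ↔ x ∈ inputWord A wI j := by
  simp only [comp7, inputWord, mem_union, mem_image, Sum.inl.injEq, Sum.exists, Sum.elim_inl,
    Sum.elim_inr, reduceCtorEq, and_false, exists_false, or_false]
  exact or_iff_left fun ⟨a, _, ha⟩ => hx (ha ▸ a.2)

lemma mem_noiseW_hiddenSet_comp7_iff
    {T : Transd (Set {x : AP // x ∉ A}) (Set ({x : AP // x ∈ A} ⊕ Unit))}
    {wI : Word (Set {x : AP // x ∉ A})} {w : Word (Set (AP ⊕ Unit))} :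
    w ∈ noiseW (hiddenSet A) (comp7 A T wI) ↔
      (fun j => Sum.inl ⁻¹' w j) ∈ noiseW A (inputWord A wI) := by
  simp only [mem_noiseW_iff, mem_preimage]
  refine forall_congr' fun j => ⟨fun h x hx => ?_, fun h z hz => ?_⟩
  · rw [← inl_mem_comp7_iff hx]
    exact h _ (inl_mem_hiddenSet.not.mpr hx)
  · obtain x | ⟨⟩ := z
    · have hx : x ∉ A := inl_mem_hiddenSet.not.mp hz
      rw [inl_mem_comp7_iff hx]
      exact h x hx
    · exact absurd inr_mem_hiddenSet hz

lemma hides7_iff_forall_exists_not_mem (Lθ : Set (Word (Set AP)))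
    (T : Transd (Set {x : AP // x ∉ A}) (Set ({x : AP // x ∈ A} ⊕ Unit))) :
    hides7 A Lθ T ↔ ∀ wI, ∃ u ∈ noiseW A (inputWord A wI), u ∉ Lθ := by
  simp only [hides7, mem_noiseW_hiddenSet_comp7_iff]
  refine forall_congr' fun wI => ⟨?_, fun ⟨u, hu, huθ⟩ => ?_⟩
  · rintro ⟨-, -, wm, hwm, -, hwmψ⟩
    exact ⟨_, hwm, fun h => hwmψ (Or.inl h)⟩
  · have hpre (v : Word (Set AP)) :
        (fun j => Sum.inl ⁻¹' (Sum.inl '' v j : Set (AP ⊕ Unit))) = v :=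
      funext fun j => preimage_image_eq _ Sum.inl_injective
    refine ⟨fun j => Sum.inl '' inputWord A wI j ∪ range Sum.inr, ?_,
      fun j => Sum.inl '' u j, by rwa [hpre], Or.inr (mem_union_right _ (mem_range_self ())),
      ?_⟩
    · simp only [preimage_union, preimage_inl_range_inr, union_empty, hpre]
      exact self_mem_noiseW _ _
    · rintro (h | h)
      · exact huθ (hpre u ▸ h)
      · simp at h

lemma not_exists_forall_noiseW_iff (Lθ : Set (Word (Set AP))) :
    (¬ ∃ w : Word (Set AP), ∀ w' ∈ noiseW A w, w' ∈ Lθ) ↔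
      ∀ wI, ∃ u ∈ noiseW A (inputWord A wI), u ∉ Lθ := by
  push Not
  refine ⟨fun h wI => h _, fun h w => ?_⟩
  rw [← noiseW_congr (inputWord_preimage_inter_compl w)]
  exact h _

lemma hides7_iff (Lθ : Set (Word (Set AP)))
    (T : Transd (Set {x : AP // x ∉ A}) (Set ({x : AP // x ∈ A} ⊕ Unit))) :
    hides7 A Lθ T ↔ ¬ ∃ w : Word (Set AP), ∀ w' ∈ noiseW A w, w' ∈ Lθ := by
  rw [hides7_iff_forall_exists_not_mem, not_exists_forall_noiseW_iff]

variable (A) in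
def Transd.const :
    Transd (Set {x : AP // x ∉ A}) (Set ({x : AP // x ∈ A} ⊕ Unit)) :=
  ⟨Unit, inferInstance, (), fun _ _ => (), fun _ => ∅⟩

lemma Transd.card_const_S : @Fintype.card (Transd.const A).S (Transd.const A).fintype_S = 1 :=
  Fintype.card_unit

end Hiding

theorem aqltl_unsat_iff_hiding_general {AP : Type} (A : Set AP)
    (Lθ : Set (Word (Set AP))) :
    ((¬ ∃ w : Word (Set AP), ∀ w' ∈ noiseW A w, w' ∈ Lθ) ↔
      (∀ T : Transd (Set {x : AP // x ∉ A}) (Set ({x : AP // x ∈ A} ⊕ Unit)),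
        hides7 A Lθ T)) ∧
    ((∀ T : Transd (Set {x : AP // x ∉ A}) (Set ({x : AP // x ∈ A} ⊕ Unit)),
        hides7 A Lθ T) ↔
      (∃ T : Transd (Set {x : AP // x ∉ A}) (Set ({x : AP // x ∈ A} ⊕ Unit)),
        @Fintype.card T.S T.fintype_S = 1 ∧ hides7 A Lθ T)) := by
  simp only [hides7_iff]
  exact ⟨⟨fun h _ => h, fun h => h (Transd.const A)⟩,
    ⟨fun h => ⟨Transd.const A, Transd.card_const_S, h (Transd.const A)⟩,
      fun ⟨_, _, h⟩ _ => h⟩⟩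

/-- unsatisfiability of `∀A θ` is equivalent to all transducers hiding
the secret, and to some single-state transducer hiding it. -/
theorem aqltl_unsat_iff_hiding {AP : Type} [Fintype AP] (A : Set AP)
    (Lθ : Set (Word (Set AP))) :
    ((¬ ∃ w : Word (Set AP), ∀ w' ∈ noiseW A w, w' ∈ Lθ) ↔
      (∀ T : Transd (Set {x : AP // x ∉ A}) (Set ({x : AP // x ∈ A} ⊕ Unit)),
        hides7 A Lθ T)) ∧
    ((∀ T : Transd (Set {x : AP // x ∉ A}) (Set ({x : AP // x ∈ A} ⊕ Unit)),
        hides7 A Lθ T) ↔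
      (∃ T : Transd (Set {x : AP // x ∉ A}) (Set ({x : AP // x ∈ A} ⊕ Unit)),
        @Fintype.card T.S T.fintype_S = 1 ∧ hides7 A Lθ T)) :=
  aqltl_unsat_iff_hiding_general A Lθ
end

section
/- Let N = ⟨2^I, Q, q₀, δ, α⟩ be a nondeterministic Büchi word automaton such that every word in (2^I)^ω has at least one rejecting run of N. Work over the alphabet 2^I × Q, identifying a word over it with w_I⊕r, where w_I ∈ (2^I)^ω, r ∈ Q^ω, and the j-th letter is ⟨(w_I)_j, r_{j+1}⟩. Let L_ψ = {w_I⊕r : q₀·r is an accepting run of N on w_I}. Consider transducers with input alphabet 2^I and output alphabet Q, whose whole output is hidden: such a transducer T, on input w_I, produces a computation w_I⊕r_T for some r_T ∈ Q^ω, and T hides L_ψ if for every w_I ∈ (2^I)^ω there exist r⁺, r⁻ ∈ Q^ω with w_I⊕r⁺ ∈ L_ψ and w_I⊕r⁻ ∉ L_ψ. Then the following are equivalent: (i) N is universal, i.e., L(N) = (2^I)^ω; (ii) every such transducer hides L_ψ; (iii) some such transducer with a single state hides L_ψ. -/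
open Set

/-- The secret `L_ψ = {w_I⊕r : q₀·r is an accepting run of N on w_I}`. -/
def secret8 {I Q : Type} (N : NBW (Set I) Q) : Set (Word (Set I × Q)) :=
  {v | N.IsRun (runOf N.q0 v) (fun j => (v j).1) ∧
       (infOcc (runOf N.q0 v) ∩ N.α).Nonempty}

/-- A transducer with input alphabet `2^I` and output alphabet `Q`, whose whole
output is hidden, hides `L_ψ` if for every input word there are completions of the
hidden `Q`-component inside and outside the secret. -/
def hides8 {I Q : Type} (N : NBW (Set I) Q) (T : Transd (Set I) Q) : Prop :=
  ∀ wI : Word (Set I), ∃ rp rm : Word Q,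
    (fun j => (wI j, rp j)) ∈ secret8 N ∧ (fun j => (wI j, rm j)) ∉ secret8 N

/-- universality of `N` is equivalent to all such transducers hiding the
secret, and to some single-state transducer hiding it. -/
theorem universal_iff_hiding {I Q : Type} [Fintype I] [Fintype Q]
    (N : NBW (Set I) Q)
    (hrej : ∀ w : Word (Set I), ∃ r, N.IsRun r w ∧ ¬(infOcc r ∩ N.α).Nonempty) :
    ((N.lang = Set.univ) ↔ (∀ T : Transd (Set I) Q, hides8 N T)) ∧
    ((∀ T : Transd (Set I) Q, hides8 N T) ↔
      (∃ T : Transd (Set I) Q, @Fintype.card T.S T.fintype_S = 1 ∧ hides8 N T)) := by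
  -- `hides8 N T` does not depend on `T`.
  have key : (N.lang = Set.univ) ↔
      (∀ wI : Word (Set I), ∃ rp rm : Word Q,
        (fun j => (wI j, rp j)) ∈ secret8 N ∧ (fun j => (wI j, rm j)) ∉ secret8 N) := by
    constructor
    · intro hu wI
      have hw : wI ∈ N.lang := hu ▸ Set.mem_univ wI
      obtain ⟨r, hr, hacc⟩ := hw
      obtain ⟨r', hr', hrej'⟩ := hrej wI
      have hrun : runOf N.q0 (fun j => (wI j, r (j+1))) = r := by
        funext n; cases n with
        | zero => simpa [runOf] using hr.1.symm
        | succ k => rfl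
      have hrun' : runOf N.q0 (fun j => (wI j, r' (j+1))) = r' := by
        funext n; cases n with
        | zero => simpa [runOf] using hr'.1.symm
        | succ k => rfl
      refine ⟨fun j => r (j+1), fun j => r' (j+1), ?_, ?_⟩
      · constructor
        · rw [hrun]; exact hr
        · rw [hrun]; exact hacc
      · intro hmem
        exact hrej' (hrun' ▸ hmem.2)
    · intro hp
      ext w
      simp only [Set.mem_univ, iff_true]
      obtain ⟨rp, rm, hmem, _⟩ := hp w
      exact ⟨runOf N.q0 (fun j => (w j, rp j)), hmem.1, hmem.2⟩
  constructor
  · exact key.trans ⟨fun h T => h, fun h => h ⟨Unit, inferInstance, (), fun _ _ => (), fun _ => N.q0⟩⟩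
  · constructor
    · intro h
      exact ⟨⟨Unit, inferInstance, (), fun _ _ => (), fun _ => N.q0⟩, rfl, h _⟩
    · rintro ⟨T, _, hT⟩ T'
      exact hT
end

section
/- Let I = {i}, O = H = {o}, and L_ψ = {w ∈ (2^{i,o})^ω : for all j ≥ 0, o ∈ w_j if and only if i ∈ w_{j+1}}. Then: (1) for every word w ∈ (2^{i,o})^ω, the set noise_H(w) ∩ L_ψ is a singleton, while noise_H(w) ∖ L_ψ is nonempty; consequently, (2) every (I/O)-transducer H-hides L_ψ. -/
open Set

/-- `I = {i}` and `O = {o}` are singletons; the signal `i` is `Sum.inl ()` and the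
signal `o` is `Sum.inr ()`.  The hidden set is `H = {o}`. -/
def H9 : Set (Unit ⊕ Unit) := {Sum.inr ()}

/-- The secret `ψ = G(o ↔ Xi)`. -/
def Lψ9 : Set (Word (Set (Unit ⊕ Unit))) :=
  {w | ∀ j, Sum.inr () ∈ w j ↔ Sum.inl () ∈ w (j + 1)}

section Aux

lemma inl_mem_H9c : Sum.inl () ∈ H9ᶜ := by simp [H9]
lemma inr_not_mem_H9c : Sum.inr () ∉ H9ᶜ := by simp [H9]

/-- the positive completion -/
def posW (w : Word (Set (Unit ⊕ Unit))) : Word (Set (Unit ⊕ Unit)) :=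
  fun j => (w j ∩ H9ᶜ) ∪ {x | x = Sum.inr () ∧ Sum.inl () ∈ w (j + 1)}

/-- the negative completion -/
def negW (w : Word (Set (Unit ⊕ Unit))) : Word (Set (Unit ⊕ Unit)) :=
  fun j => (w j ∩ H9ᶜ) ∪ {x | x = Sum.inr () ∧ Sum.inl () ∉ w (j + 1)}

lemma noise_aux (w : Word (Set (Unit ⊕ Unit))) (P : ℕ → Prop) :
    (fun j => (w j ∩ H9ᶜ) ∪ {x | x = Sum.inr () ∧ P j}) ∈ noiseW H9 w := by
  intro j
  ext x
  rcases x with ⟨⟩ | ⟨⟩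
  · simp [H9]
  · simp [H9]

lemma posW_mem_noise (w : Word (Set (Unit ⊕ Unit))) : posW w ∈ noiseW H9 w :=
  noise_aux w _

lemma negW_mem_noise (w : Word (Set (Unit ⊕ Unit))) : negW w ∈ noiseW H9 w :=
  noise_aux w _

lemma mem_inl_of_noise {w u : Word (Set (Unit ⊕ Unit))} (hu : u ∈ noiseW H9 w) (j : ℕ) :
    Sum.inl () ∈ u j ↔ Sum.inl () ∈ w j := by
  have := Set.ext_iff.1 (hu j) (Sum.inl ())
  simpa [H9] using this

lemma inr_mem_posW (w : Word (Set (Unit ⊕ Unit))) (j : ℕ) :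
    Sum.inr () ∈ posW w j ↔ Sum.inl () ∈ w (j + 1) := by
  simp [posW, H9]

lemma inr_mem_negW (w : Word (Set (Unit ⊕ Unit))) (j : ℕ) :
    Sum.inr () ∈ negW w j ↔ Sum.inl () ∉ w (j + 1) := by
  simp [negW, H9]

lemma posW_mem_L (w : Word (Set (Unit ⊕ Unit))) : posW w ∈ Lψ9 := by
  intro j
  rw [inr_mem_posW, mem_inl_of_noise (posW_mem_noise w)]

lemma negW_not_mem_L (w : Word (Set (Unit ⊕ Unit))) : negW w ∉ Lψ9 := by
  intro h
  have h0 := h 0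
  rw [inr_mem_negW, mem_inl_of_noise (negW_mem_noise w)] at h0
  tauto

lemma unique_pos {w u : Word (Set (Unit ⊕ Unit))} (hn : u ∈ noiseW H9 w) (hL : u ∈ Lψ9) :
    u = posW w := by
  funext j
  ext x
  rcases x with ⟨⟩ | ⟨⟩
  · rw [mem_inl_of_noise hn]
    rw [show (Sum.inl () ∈ posW w j) ↔ _ from mem_inl_of_noise (posW_mem_noise w) j]
  · rw [show (Sum.inr () ∈ u j) ↔ _ from hL j, inr_mem_posW, mem_inl_of_noise hn]

end Aux

/-- (1) for every word `w`, `noise_H(w) ∩ L_ψ` is a singleton while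
`noise_H(w) ∖ L_ψ` is nonempty; (2) consequently every transducer `H`-hides `L_ψ`. -/
theorem unique_completion_and_all_hide :
    (∀ w : Word (Set (Unit ⊕ Unit)),
      (∃ a, noiseW H9 w ∩ Lψ9 = {a}) ∧ (noiseW H9 w \ Lψ9).Nonempty) ∧
    (∀ T : Transd (Set Unit) (Set Unit), T.hides H9 Lψ9) := by
  constructor
  · intro w
    refine ⟨⟨posW w, ?_⟩, negW w, negW_mem_noise w, negW_not_mem_L w⟩
    apply Set.eq_singleton_iff_unique_mem.2
    exact ⟨⟨posW_mem_noise w, posW_mem_L w⟩, fun u ⟨hn, hL⟩ => unique_pos hn hL⟩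
  · intro T wI
    exact ⟨posW _, posW_mem_noise _, negW _, negW_mem_noise _, posW_mem_L _, negW_not_mem_L _⟩
end

section
/- Let I = {i}, O = H = {o}, and L_ψ = {w ∈ (2^{i,o})^ω : for all j ≥ 0, o ∈ w_j if and only if i ∈ w_{j+1}}. Then for every certifying transducer C there exists an input word w_I ∈ (2^I)^ω such that both C(w_I) ∉ L_ψ and C'(w_I) ∉ L_ψ. Consequently, no certifying transducer realizes ⟨(2^{i,o})^ω, L_ψ, H⟩ with certified privacy, even though every (I/O)-transducer H-hides L_ψ. -/
open Set

/-- A certifying transducer: an (I/O)-transducer with an additional labeling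
`c : S → 2^H` producing the certificate. -/
structure CTrans (I O : Type) (H : Set (I ⊕ O)) where
  S : Type
  fintype_S : Fintype S
  s0 : S
  η : S → Set I → S
  τ : S → Set O
  c : S → Set H

def CTrans.stateAt {I O : Type} {H : Set (I ⊕ O)} (C : CTrans I O H)
    (w : Word (Set I)) : ℕ → C.S
  | 0 => C.η C.s0 (w 0)
  | n + 1 => C.η (C.stateAt w n) (w (n + 1))

/-- The (real) computation of a certifying transducer. -/
def CTrans.comp {I O : Type} {H : Set (I ⊕ O)} (C : CTrans I O H)
    (wI : Word (Set I)) : Word (Set (I ⊕ O)) :=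
  fun j => Sum.inl '' wI j ∪ Sum.inr '' C.τ (C.stateAt wI j)

/-- The certificate produced by a certifying transducer. -/
def CTrans.cert {I O : Type} {H : Set (I ⊕ O)} (C : CTrans I O H)
    (wI : Word (Set I)) : Word (Set H) :=
  fun j => C.c (C.stateAt wI j)

/-- The alternative computation: agrees with the real computation on the visible
signals and with the certificate on the hidden signals. -/
def CTrans.alt {I O : Type} {H : Set (I ⊕ O)} (C : CTrans I O H)
    (wI : Word (Set I)) : Word (Set (I ⊕ O)) :=
  fun j => (C.comp wI j ∩ Hᶜ) ∪ (Subtype.val '' C.cert wI j)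

/-- `C` realizes `⟨Lφ, Lψ, H⟩` with certified privacy. -/
def CTrans.certRealizes {I O : Type} {H : Set (I ⊕ O)} (C : CTrans I O H)
    (Lφ Lψ : Set (Word (Set (I ⊕ O)))) : Prop :=
  ∀ wI, C.comp wI ∈ Lφ ∧ (C.comp wI ∈ Lψ ↔ C.alt wI ∉ Lψ)

/-- `I = {i}`, `O = H = {o}`: the signal `i` is `Sum.inl ()`, `o` is `Sum.inr ()`. -/
def H10 : Set (Unit ⊕ Unit) := {Sum.inr ()}

/-- The secret `ψ = G(o ↔ Xi)`. -/
def Lψ10 : Set (Word (Set (Unit ⊕ Unit))) :=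
  {w | ∀ j, Sum.inr () ∈ w j ↔ Sum.inl () ∈ w (j + 1)}

/-- for every certifying transducer some input word defeats both the
real and the alternative computation; hence `⟨⊤, Lψ, H⟩` is not realizable with
certified privacy, even though every (I/O)-transducer `H`-hides `Lψ`. -/
theorem no_certified_privacy :
    (∀ C : CTrans Unit Unit H10, ∃ wI : Word (Set Unit),
        C.comp wI ∉ Lψ10 ∧ C.alt wI ∉ Lψ10) ∧
    (¬ ∃ C : CTrans Unit Unit H10,
        C.certRealizes (Set.univ : Set (Word (Set (Unit ⊕ Unit)))) Lψ10) ∧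
    (∀ T : Transd (Set Unit) (Set Unit), T.hides H10 Lψ10) := by
  classical
  have hinr : Sum.inr () ∈ H10 := rfl
  have hunit : ∀ s : Set Unit, (∃ x, x ∈ s) ↔ () ∈ s :=
    fun s => ⟨fun ⟨x, hx⟩ => by cases x; exact hx, fun h => ⟨(), h⟩⟩
  have hinl : Sum.inl () ∈ H10ᶜ := by simp [H10]
  have key : ∀ C : CTrans Unit Unit H10, ∃ wI : Word (Set Unit),
      C.comp wI ∉ Lψ10 ∧ C.alt wI ∉ Lψ10 := by
    intro C
    set s1 := C.η C.s0 ∅ with hs1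
    set a1 : Set Unit := if () ∈ C.τ s1 then ∅ else Set.univ with ha1
    set s2 := C.η s1 a1 with hs2
    set a2 : Set Unit := if (⟨Sum.inr (), hinr⟩ : H10) ∈ C.c s2 then ∅ else Set.univ with ha2
    set wI : Word (Set Unit) := fun j =>
      if j = 0 then ∅ else if j = 1 then a1 else if j = 2 then a2 else ∅ with hwI
    have hw0 : wI 0 = ∅ := rfl
    have hw1 : wI 1 = a1 := rfl
    have hw2 : wI 2 = a2 := rfl
    have hst0 : C.stateAt wI 0 = s1 := by
      show C.η C.s0 (wI 0) = s1
      rw [hw0]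
    have hst1 : C.stateAt wI 1 = s2 := by
      show C.η (C.stateAt wI 0) (wI 1) = s2
      rw [hst0, hw1]
    refine ⟨wI, ?_, ?_⟩
    · intro h
      have h0 := h 0
      have hl : Sum.inr () ∈ C.comp wI 0 ↔ () ∈ C.τ s1 := by
        simp [CTrans.comp, hst0, hunit]
      have hr : Sum.inl () ∈ C.comp wI 1 ↔ () ∈ a1 := by
        simp [CTrans.comp, hw1, hunit]
      rw [hl, hr] at h0
      by_cases hb : () ∈ C.τ s1
      · have : ¬ () ∈ a1 := by simp [ha1, hb]
        exact this (h0.mp hb)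
      · have : () ∈ a1 := by simp [ha1, hb]
        exact hb (h0.mpr this)
    · intro h
      have h1 := h 1
      have hl : Sum.inr () ∈ C.alt wI 1 ↔ (⟨Sum.inr (), hinr⟩ : H10) ∈ C.c s2 := by
        simp only [CTrans.alt, Set.mem_union, Set.mem_inter_iff, Set.mem_compl_iff]
        constructor
        · rintro (⟨-, habs⟩ | ⟨x, hx, hval⟩)
          · exact absurd hinr habs
          · have : x = ⟨Sum.inr (), hinr⟩ := Subtype.ext hval
            rw [this] at hx
            rwa [CTrans.cert, hst1] at hx
        · intro hx
          right
          exact ⟨⟨Sum.inr (), hinr⟩, by rwa [CTrans.cert, hst1], rfl⟩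
      have hr : Sum.inl () ∈ C.alt wI 2 ↔ () ∈ a2 := by
        simp only [CTrans.alt, Set.mem_union, Set.mem_inter_iff, Set.mem_compl_iff]
        constructor
        · rintro (⟨hc, -⟩ | ⟨x, -, hval⟩)
          · have : Sum.inl () ∈ C.comp wI 2 ↔ () ∈ wI 2 := by
              simp [CTrans.comp, hunit]
            rw [← hw2]; exact this.mp hc
          · exact absurd (hval ▸ x.2) (by simp [H10])
        · intro hx
          left
          refine ⟨?_, hinl⟩
          simp [CTrans.comp, hw2, hx]
      rw [hl, hr] at h1
      by_cases hb : (⟨Sum.inr (), hinr⟩ : H10) ∈ C.c s2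
      · have : ¬ () ∈ a2 := by simp [ha2, hb]
        exact this (h1.mp hb)
      · have : () ∈ a2 := by simp [ha2, hb]
        exact hb (h1.mpr this)
  refine ⟨key, ?_, ?_⟩
  · rintro ⟨C, hC⟩
    obtain ⟨wI, h1, h2⟩ := key C
    exact h1 (((hC wI).2).mpr h2)
  · intro T wI
    set w := ioComp T wI with hw
    have hiff : ∀ (P : ℕ → Prop) j,
        Sum.inl () ∈ ((w j ∩ H10ᶜ) ∪ (if P j then ({Sum.inr ()} : Set (Unit ⊕ Unit)) else ∅))
          ↔ Sum.inl () ∈ w j := by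
      intro P j
      by_cases hp : P j <;> simp [hp, hinl]
    have hiffr : ∀ (P : ℕ → Prop) j,
        Sum.inr () ∈ ((w j ∩ H10ᶜ) ∪ (if P j then ({Sum.inr ()} : Set (Unit ⊕ Unit)) else ∅))
          ↔ P j := by
      intro P j
      by_cases hp : P j <;> simp [hp, H10]
    have hnoise : ∀ (P : ℕ → Prop),
        (fun j => (w j ∩ H10ᶜ) ∪ (if P j then ({Sum.inr ()} : Set (Unit ⊕ Unit)) else ∅))
          ∈ noiseW H10 w := by
      intro P j
      by_cases hp : P j
      · simp only [hp, if_true, Set.union_inter_distrib_right,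
          show ({Sum.inr ()} : Set (Unit ⊕ Unit)) ∩ H10ᶜ = ∅ by simp [H10],
          Set.union_empty, Set.inter_assoc, Set.inter_self]
      · simp only [hp, if_false, Set.union_empty, Set.inter_assoc, Set.inter_self]
    refine ⟨_, hnoise (fun j => Sum.inl () ∈ w (j+1)), _,
        hnoise (fun j => Sum.inl () ∉ w (j+1)), ?_, ?_⟩
    · intro j
      exact (hiffr (fun j => Sum.inl () ∈ w (j + 1)) j).trans
        (hiff (fun j => Sum.inl () ∈ w (j + 1)) (j + 1)).symm
    · intro hmem
      have this0 := hmem 0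
      have A := hiffr (fun j => Sum.inl () ∉ w (j + 1)) 0
      have B := hiff (fun j => Sum.inl () ∉ w (j + 1)) 1
      exact (not_iff_self ((A.symm.trans this0).trans B)).elim
end

section
/- Let I and O be disjoint finite sets of signals, H ⊆ I∪O with visible signals V = (I∪O)∖H, and L_φ, L_ψ ⊆ (2^(I∪O))^ω. Define Θ ⊆ (2^(I∪O) × 2^H)^ω as the set of all words w⊕u (where w ∈ (2^(I∪O))^ω and u ∈ (2^H)^ω, paired letterwise) such that w ∈ L_φ and, letting w' be the unique word with w'|_V = w|_V and w'|_H = u, it holds that (w ∈ L_ψ if and only if w' ∉ L_ψ). Then ⟨L_φ, L_ψ, H⟩ is realizable with certified privacy by a certifying transducer if and only if Θ is realizable by a transducer with input alphabet 2^I and output alphabet 2^O × 2^H (whose computation on input w_I = i₀·i₁·⋯ has j-th letter ⟨i_j ∪ o_j, u_j⟩, where ⟨o_j,u_j⟩ is its output after reading i₀⋯i_j). -/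
open Set

/-- The unique word agreeing with `w` on the visible signals and with `u` on the
hidden signals. -/
def altWord {I O : Type} (H : Set (I ⊕ O)) (w : Word (Set (I ⊕ O)))
    (u : Word (Set H)) : Word (Set (I ⊕ O)) :=
  fun j => (w j ∩ Hᶜ) ∪ (Subtype.val '' u j)

/-- The language `Θ` over `2^(I∪O) × 2^H`: `w⊕u` belongs to `Θ` iff `w ∈ Lφ` and the
alternative word determined by `u` disagrees with `w` on the secret `Lψ`. -/
def Theta {I O : Type} (H : Set (I ⊕ O)) (Lφ Lψ : Set (Word (Set (I ⊕ O)))) :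
    Set (Word (Set (I ⊕ O) × Set H)) :=
  {v | (fun j => (v j).1) ∈ Lφ ∧
    ((fun j => (v j).1) ∈ Lψ ↔
      altWord H (fun j => (v j).1) (fun j => (v j).2) ∉ Lψ)}

/-- The computation of a transducer with input alphabet `2^I` and output alphabet
`2^O × 2^H`, as a word over `2^(I∪O) × 2^H`. -/
def pairComp {I O : Type} {H : Set (I ⊕ O)}
    (T : Transd (Set I) (Set O × Set H)) (wI : Word (Set I)) :
    Word (Set (I ⊕ O) × Set H) :=
  fun j => (Sum.inl '' wI j ∪ Sum.inr '' (T.out wI j).1, (T.out wI j).2)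

/-!
A certifying transducer is the same data as a transducer with output alphabet `2^O × 2^H`: the
certificate is the second output component. Under this correspondence the computation of the
transducer is the computation of the certifying transducer paired with its certificate, and
membership of that pair in `Θ` unfolds to exactly the certified-privacy condition.
-/

section

variable {I O : Type} {H : Set (I ⊕ O)}

def CTrans.toTransd (C : CTrans I O H) : Transd (Set I) (Set O × Set H) :=
  ⟨C.S, C.fintype_S, C.s0, C.η, fun s => (C.τ s, C.c s)⟩

def Transd.toCTrans (T : Transd (Set I) (Set O × Set H)) : CTrans I O H :=
  ⟨T.S, T.fintype_S, T.s0, T.η, fun s => (T.τ s).1, fun s => (T.τ s).2⟩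

theorem Transd.toCTrans_toTransd (T : Transd (Set I) (Set O × Set H)) :
    T.toCTrans.toTransd = T :=
  rfl

theorem CTrans.stateAt_toTransd (C : CTrans I O H) (wI : Word (Set I)) :
    C.toTransd.stateAt wI = C.stateAt wI := by
  funext n
  induction n with
  | zero => rfl
  | succ n ih => exact congrArg (C.η · (wI (n + 1))) ih

theorem CTrans.pairComp_toTransd (C : CTrans I O H) (wI : Word (Set I)) :
    pairComp C.toTransd wI = fun j => (C.comp wI j, C.cert wI j) := by
  funext j
  simp only [pairComp, Transd.out, C.stateAt_toTransd]
  rfl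

theorem pair_mem_Theta_iff {Lφ Lψ : Set (Word (Set (I ⊕ O)))}
    (w : Word (Set (I ⊕ O))) (u : Word (Set H)) :
    (fun j => (w j, u j)) ∈ Theta H Lφ Lψ ↔ w ∈ Lφ ∧ (w ∈ Lψ ↔ altWord H w u ∉ Lψ) :=
  Iff.rfl

theorem CTrans.pairComp_toTransd_mem_Theta_iff (C : CTrans I O H)
    (Lφ Lψ : Set (Word (Set (I ⊕ O)))) (wI : Word (Set I)) :
    pairComp C.toTransd wI ∈ Theta H Lφ Lψ ↔
      C.comp wI ∈ Lφ ∧ (C.comp wI ∈ Lψ ↔ C.alt wI ∉ Lψ) := by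
  rw [C.pairComp_toTransd]
  exact pair_mem_Theta_iff (C.comp wI) (C.cert wI)

end

theorem certified_privacy_iff_theta_general {I O : Type}
    (H : Set (I ⊕ O)) (Lφ Lψ : Set (Word (Set (I ⊕ O)))) :
    (∃ C : CTrans I O H, C.certRealizes Lφ Lψ) ↔
    (∃ T : Transd (Set I) (Set O × Set H), ∀ wI, pairComp T wI ∈ Theta H Lφ Lψ) := by
  constructor
  · rintro ⟨C, hC⟩
    exact ⟨C.toTransd, fun wI => (C.pairComp_toTransd_mem_Theta_iff Lφ Lψ wI).2 (hC wI)⟩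
  · rintro ⟨T, hT⟩
    refine ⟨T.toCTrans, fun wI => ?_⟩
    rw [← T.toCTrans.pairComp_toTransd_mem_Theta_iff, T.toCTrans_toTransd]
    exact hT wI

/-- realizability with certified privacy coincides with realizability
of `Θ` by transducers with output alphabet `2^O × 2^H`. -/
theorem certified_privacy_iff_theta {I O : Type} [Fintype I] [Fintype O]
    (H : Set (I ⊕ O)) (Lφ Lψ : Set (Word (Set (I ⊕ O)))) :
    (∃ C : CTrans I O H, C.certRealizes Lφ Lψ) ↔
    (∃ T : Transd (Set I) (Set O × Set H), ∀ wI, pairComp T wI ∈ Theta H Lφ Lψ) :=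
  certified_privacy_iff_theta_general H Lφ Lψ
end

section
/- Let G = (V,E) be an undirected graph with nonempty edge set E = {e₁,…,e_m} (m ≥ 1, each e_i a set of two distinct vertices). Take I = ∅ and O = V. Let L² = {w ∈ (2^V)^ω : for all 1 ≤ i ≤ m, w_{i-1} ∩ e_i ≠ ∅}, L_φ = {∅^ω} ∪ L², and L_ψ = L². Then for every H ⊆ V: ⟨L_φ, L_ψ, H⟩ is realizable with privacy under knowledge of the specification if and only if H is a vertex cover of G (i.e., H ∩ e ≠ ∅ for every e ∈ E). -/
open Set

/-- `⟨Lφ, Lψ, H⟩` is realizable with privacy under knowledge of the specification by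
a closed (`(∅/O)`-) transducer: the two noise-witnesses must also satisfy `Lφ`. -/
def closedRealizablePrivacyKnowingSpec {O : Type} (Lφ Lψ : Set (Word (Set O)))
    (H : Set O) : Prop :=
  ∃ T : Transd (Set Empty) (Set O),
    (∀ wI, closedComp T wI ∈ Lφ) ∧
    (∀ wI, ∃ wp ∈ noiseW H (closedComp T wI) ∩ Lφ,
      ∃ wm ∈ noiseW H (closedComp T wI) ∩ Lφ, wp ∈ Lψ ∧ wm ∉ Lψ)

/-- with `L_φ = {∅^ω} ∪ L²` and `L_ψ = L²`, where `L²` encodes the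
edges of a graph, realizability with privacy under knowledge of the specification
characterizes vertex covers. -/
theorem vertex_cover_iff_privacy_knowing_spec {V : Type} [Fintype V]
    (m : ℕ) (hm : 1 ≤ m) (e : Fin m → Set V)
    (he : ∀ i, ∃ u v : V, u ≠ v ∧ e i = {u, v}) :
    ∀ H : Set V,
      closedRealizablePrivacyKnowingSpec
        ({w | w = fun _ => (∅ : Set V)} ∪
          {w : Word (Set V) | ∀ i : Fin m, (w i.1 ∩ e i).Nonempty})
        {w : Word (Set V) | ∀ i : Fin m, (w i.1 ∩ e i).Nonempty} H ↔
      ∀ i : Fin m, (H ∩ e i).Nonempty := by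
  intro H
  constructor
  · rintro ⟨T, hφ, hpriv⟩ i
    obtain ⟨wp, ⟨hpN, hpφ⟩, wm, ⟨hmN, hmφ⟩, hpψ, hmψ⟩ := hpriv (fun _ => ∅)
    have hwm : wm = fun _ => (∅ : Set V) := by
      cases hmφ with
      | inl h => exact h
      | inr h => exact absurd h hmψ
    have hw : ∀ j, closedComp T (fun _ => ∅) j ∩ Hᶜ = ∅ := by
      intro j
      have h := hmN j
      rw [hwm] at h
      simpa using h.symm
    have hsub : wp i.1 ⊆ H := by
      have h1 := hpN i.1
      rw [hw i.1] at h1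
      intro x hx
      by_contra hxH
      exact absurd (h1 ▸ ⟨hx, hxH⟩ : x ∈ (∅ : Set V)) (by simp)
    obtain ⟨x, hx1, hx2⟩ := hpψ i
    exact ⟨x, hsub hx1, hx2⟩
  · intro hc
    refine ⟨⟨Unit, inferInstance, (), fun _ _ => (), fun _ => ∅⟩, ?_, ?_⟩
    · intro wI
      left
      rfl
    · intro wI
      refine ⟨fun _ => H, ⟨fun j => by simp [closedComp, Transd.out],
        Or.inr fun i => hc i⟩,
        fun _ => (∅ : Set V), ⟨fun j => rfl, Or.inl rfl⟩,
        fun i => hc i, ?_⟩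
      intro h
      obtain ⟨x, hx1, _⟩ := h ⟨0, hm⟩
      exact hx1
end

section
/- Let I and O be disjoint finite sets of signals, H ⊆ I∪O, let T be an (I/O)-transducer with state set S, and let U_ψ = ⟨2^(I∪O), Q, q₀, δ, α⟩ be a universal co-Büchi word automaton. Then there exists a universal co-Büchi word automaton U⁺ over the alphabet 2^I with state set S × S × Q such that L(U⁺) = {w_I ∈ (2^I)^ω : noise_H(T(w_I)) ∩ L(T) ⊆ L(U_ψ)}. -/
open Set

/-- A universal co-Büchi word automaton with alphabet `A` and state set `Q`. -/
structure UCW (A Q : Type) where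
  q0 : Q
  δ : Q → A → Set Q
  α : Set Q

def UCW.IsRun {A Q : Type} (U : UCW A Q) (r : Word Q) (w : Word A) : Prop :=
  r 0 = U.q0 ∧ ∀ j, r (j + 1) ∈ U.δ (r j) (w j)

/-- The language of a UCW: words all of whose runs visit `α` only finitely often. -/
def UCW.lang {A Q : Type} (U : UCW A Q) : Set (Word A) :=
  {w | ∀ r, U.IsRun r w → {j | r j ∈ U.α}.Finite}

/-- there is a UCW over `2^I`, with state set `S × S × Q`, accepting
exactly the input words `w_I` with `noise_H(T(w_I)) ∩ L(T) ⊆ L(U_ψ)`. -/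
theorem ucw_for_observer_knowing_transducer {I O Qψ : Type}
    [Fintype I] [Fintype O] [Fintype Qψ]
    (H : Set (I ⊕ O)) (T : Transd (Set I) (Set O))
    (Uψ : UCW (Set (I ⊕ O)) Qψ) :
    ∃ U : UCW (Set I) (T.S × T.S × Qψ),
      U.lang = {wI | noiseW H (ioComp T wI) ∩ Set.range (ioComp T) ⊆ Uψ.lang} := by
  classical
  let U : UCW (Set I) (T.S × T.S × Qψ) :=
    { q0 := (T.s0, T.s0, Uψ.q0)
      δ := fun p i => {p' | p'.1 = T.η p.1 i ∧ ∃ i' : Set I, p'.2.1 = T.η p.2.1 i' ∧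
        (Sum.inl '' i ∪ Sum.inr '' T.τ p'.1) ∩ Hᶜ
          = (Sum.inl '' i' ∪ Sum.inr '' T.τ p'.2.1) ∩ Hᶜ ∧
        p'.2.2 ∈ Uψ.δ p.2.2 (Sum.inl '' i' ∪ Sum.inr '' T.τ p'.2.1)}
      α := {p | p.2.2 ∈ Uψ.α} }
  refine ⟨U, ?_⟩
  ext wI
  simp only [UCW.lang, mem_setOf_eq]
  constructor
  · -- wI ∈ L(U) → property
    intro h w hw rψ hrψ
    obtain ⟨hnoise, w'I, hw'⟩ := hw
    subst hw'
    set rU : Word (T.S × T.S × Qψ) := fun j =>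
      match j with
      | 0 => (T.s0, T.s0, Uψ.q0)
      | j + 1 => (T.stateAt wI j, T.stateAt w'I j, rψ (j + 1)) with hrUdef
    have hrun : U.IsRun rU wI := by
      refine ⟨rfl, fun j => ?_⟩
      cases j with
      | zero =>
        refine ⟨rfl, w'I 0, rfl, (hnoise 0).symm, ?_⟩
        have := hrψ.2 0
        rw [hrψ.1] at this
        exact this
      | succ j =>
        exact ⟨rfl, w'I (j + 1), rfl, (hnoise (j + 1)).symm, hrψ.2 (j + 1)⟩
    have hfin := h rU hrun
    have hset : {j | rψ j ∈ Uψ.α} = {j | rU j ∈ U.α} := by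
      ext j
      cases j with
      | zero =>
        show rψ 0 ∈ Uψ.α ↔ (rU 0).2.2 ∈ Uψ.α
        rw [hrψ.1]
      | succ j => exact Iff.rfl
    rw [hset]
    exact hfin
  · -- property → wI ∈ L(U)
    intro h rU hrU
    have h0 : rU 0 = (T.s0, T.s0, Uψ.q0) := hrU.1
    have hex : ∀ j, ∃ i' : Set I, (rU (j + 1)).2.1 = T.η (rU j).2.1 i' ∧
        (Sum.inl '' wI j ∪ Sum.inr '' T.τ (rU (j + 1)).1) ∩ Hᶜ
          = (Sum.inl '' i' ∪ Sum.inr '' T.τ (rU (j + 1)).2.1) ∩ Hᶜ ∧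
        (rU (j + 1)).2.2 ∈ Uψ.δ (rU j).2.2 (Sum.inl '' i' ∪ Sum.inr '' T.τ (rU (j + 1)).2.1) :=
      fun j => (hrU.2 j).2
    choose w'I hw'1 hw'2 hw'3 using hex
    have hcomp : ∀ j, (rU (j + 1)).1 = T.stateAt wI j ∧ (rU (j + 1)).2.1 = T.stateAt w'I j := by
      intro j
      induction j with
      | zero =>
        have h1 : (rU 1).1 = T.η (rU 0).1 (wI 0) := (hrU.2 0).1
        have h2 := hw'1 0
        rw [h0] at h1 h2
        exact ⟨h1, h2⟩
      | succ j ih =>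
        constructor
        · have := (hrU.2 (j + 1)).1
          rw [ih.1] at this
          exact this
        · have := hw'1 (j + 1)
          rw [ih.2] at this
          exact this
    have hmem : ioComp T w'I ∈ noiseW H (ioComp T wI) ∩ Set.range (ioComp T) := by
      refine ⟨fun j => ?_, w'I, rfl⟩
      have := hw'2 j
      rw [(hcomp j).1, (hcomp j).2] at this
      exact this.symm
    have hrunψ : Uψ.IsRun (fun j => (rU j).2.2) (ioComp T w'I) := by
      constructor
      · show (rU 0).2.2 = Uψ.q0
        rw [h0]
      · intro j
        have := hw'3 j
        rw [(hcomp j).2] at this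
        exact this
    exact h hmem _ hrunψ
end

section
/- Let I = {p₁, p₂} and O = {q}. Let L₁ = {w ∈ (2^(I∪O))^ω : q ∈ w₀ if and only if p₁ ∈ w₀} and L₂ = {w ∈ (2^(I∪O))^ω : for all j ≥ 0, p₂ ∈ w_j}, and let L_φ = L₁ ∪ L₂. Then for every (I/O)-transducer T: T realizes L_φ if and only if T realizes L₁. -/
open Set

/-- `I = {p₁, p₂}` (modeled as `Fin 2`, with `p₁ = 0` and `p₂ = 1`) and `O = {q}`
(modeled as `Unit`).  `L₁` says `q ∈ w₀ ↔ p₁ ∈ w₀`. -/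
def L1 : Set (Word (Set (Fin 2 ⊕ Unit))) :=
  {w | Sum.inr () ∈ w 0 ↔ Sum.inl 0 ∈ w 0}

/-- `L₂` says `p₂` always holds. -/
def L2 : Set (Word (Set (Fin 2 ⊕ Unit))) :=
  {w | ∀ j, Sum.inl 1 ∈ w j}

/-
A transducer is causal: its output at time 0 depends only on the input letter at time 0. Given
any input word, replace all letters after the first by `∅`. Since `p₂` is then absent at time 1,
the computation on the modified word lies outside `L₂`, so a transducer realizing `L₁ ∪ L₂`
puts it in `L₁`. Membership in `L₁` is decided by the first letter, which the two computations
share.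
-/

theorem Transd.stateAt_congr {Ain Aout : Type} (T : Transd Ain Aout) {w w' : Word Ain} {n : ℕ}
    (h : ∀ i ≤ n, w i = w' i) : T.stateAt w n = T.stateAt w' n := by
  induction n with
  | zero => simp only [Transd.stateAt, h 0 le_rfl]
  | succ n ih =>
    simp only [Transd.stateAt, h (n + 1) le_rfl, ih fun i hi => h i (by omega)]

theorem ioComp_congr {I O : Type} (T : Transd (Set I) (Set O)) {w w' : Word (Set I)} {n : ℕ}
    (h : ∀ i ≤ n, w i = w' i) : ioComp T w n = ioComp T w' n := by
  simp only [ioComp, Transd.out, T.stateAt_congr h, h n le_rfl]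

theorem inl_mem_ioComp {I O : Type} (T : Transd (Set I) (Set O)) (w : Word (Set I)) (j : ℕ)
    (i : I) : Sum.inl i ∈ ioComp T w j ↔ i ∈ w j := by
  simp [ioComp]

theorem Transd.realizes_mono {I O : Type} (T : Transd (Set I) (Set O))
    {L L' : Set (Word (Set (I ⊕ O)))} (hL : L ⊆ L') (h : T.realizes L) : T.realizes L' :=
  fun w => hL (h w)

theorem ioComp_notMem_L2 (T : Transd (Set (Fin 2)) (Set Unit)) {w : Word (Set (Fin 2))} {j : ℕ}
    (hj : 1 ∉ w j) : ioComp T w ∉ L2 :=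
  fun h => hj ((inl_mem_ioComp T w j 1).1 (h j))

/-- `L₁ ∪ L₂` is open-equivalent to `L₁`: a transducer realizes the
union iff it realizes `L₁`. -/
theorem open_equivalence :
    ∀ T : Transd (Set (Fin 2)) (Set Unit),
      T.realizes (L1 ∪ L2) ↔ T.realizes L1 := by
  intro T
  refine ⟨fun h w => ?_, T.realizes_mono subset_union_left⟩
  let w' : Word (Set (Fin 2)) := fun n => if n = 0 then w 0 else ∅
  have same_start : ioComp T w' 0 = ioComp T w 0 :=
    ioComp_congr T fun i hi => by simp [w', Nat.le_zero.1 hi]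
  have not_L2 : ioComp T w' ∉ L2 := ioComp_notMem_L2 T (j := 1) (by simp [w'])
  have in_L1 : ioComp T w' ∈ L1 := (h w').resolve_right not_L2
  simpa only [L1, mem_ofPred_eq, same_start] using in_L1
end

section
/- Let I = {p₁, p₂}, O = {q}, and H = {p₁, p₂}, so the visible signals are V = {q}. Let L₁ = {w : q ∈ w₀ iff p₁ ∈ w₀}, L₂ = {w : for all j ≥ 0, p₂ ∈ w_j}, L_φ = L₁ ∪ L₂, and let the secret be L_ψ = {w ∈ (2^(I∪O))^ω : p₁ ∈ w₀}. Then for every (I/O)-transducer T that realizes L_φ: (a) T realizes ⟨L_φ, L_ψ, H⟩ with privacy under knowledge of the specification, i.e., for every input word w_I there exist w⁺, w⁻ ∈ noise_H(T(w_I)) ∩ L_φ with w⁺ ∈ L_ψ and w⁻ ∉ L_ψ; but (b) for all input words w_I, w'_I ∈ (2^I)^ω with T(w_I)|_V = T(w'_I)|_V it holds that T(w_I) ∈ L_ψ if and only if T(w'_I) ∈ L_ψ; hence T does not H-hide L_ψ from an observer that knows T. -/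
open Set

/-- The hidden signals `H = {p₁, p₂}`, so the only visible signal is `q`. -/
def H18 : Set (Fin 2 ⊕ Unit) := Set.range Sum.inl

/-- The secret `L_ψ = {w : p₁ ∈ w₀}`. -/
def Lψ18 : Set (Word (Set (Fin 2 ⊕ Unit))) :=
  {w | Sum.inl 0 ∈ w 0}

/-- every transducer realizing `L₁ ∪ L₂` hides the secret from an
observer that merely knows the specification, yet the visible part of a computation
determines the value of the secret, so the secret is not hidden from an observer
that knows the transducer. -/
theorem knowing_transducer_beats_knowing_spec :
    ∀ T : Transd (Set (Fin 2)) (Set Unit), T.realizes (L1 ∪ L2) →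
      ((∀ wI, ∃ wp ∈ noiseW H18 (ioComp T wI) ∩ (L1 ∪ L2),
          ∃ wm ∈ noiseW H18 (ioComp T wI) ∩ (L1 ∪ L2),
            wp ∈ Lψ18 ∧ wm ∉ Lψ18) ∧
       (∀ wI wI' : Word (Set (Fin 2)),
          (∀ j, ioComp T wI j ∩ H18ᶜ = ioComp T wI' j ∩ H18ᶜ) →
          (ioComp T wI ∈ Lψ18 ↔ ioComp T wI' ∈ Lψ18)) ∧
       ¬ (∀ wI, ∃ wI' : Word (Set (Fin 2)),
            (∀ j, ioComp T wI j ∩ H18ᶜ = ioComp T wI' j ∩ H18ᶜ) ∧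
            (ioComp T wI ∈ Lψ18 ↔ ioComp T wI' ∉ Lψ18))) := by
  intro T hreal
  -- membership facts
  have hvis : ∀ (wI : Word (Set (Fin 2))) j,
      Sum.inr () ∈ ioComp T wI j ∩ H18ᶜ ↔ () ∈ T.out wI j := by
    intro wI j
    simp only [ioComp, H18, mem_inter_iff, mem_union, mem_image, mem_compl_iff, mem_range]
    constructor
    · rintro ⟨(⟨x, _, hx⟩ | ⟨⟨⟩, h, _⟩), _⟩
      · exact absurd hx (by simp)
      · exact h
    · intro h
      exact ⟨Or.inr ⟨(), h, trivial⟩, by simp⟩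
  -- the output at time 0 depends only on the input at time 0
  have hout0 : ∀ wI wI' : Word (Set (Fin 2)), wI 0 = wI' 0 →
      T.out wI 0 = T.out wI' 0 := by
    intro wI wI' h
    simp [Transd.out, Transd.stateAt, h]
  -- key lemma: the output at time 0 reveals p₁
  have key : ∀ wI : Word (Set (Fin 2)), (() ∈ T.out wI 0 ↔ (0 : Fin 2) ∈ wI 0) := by
    intro wI
    set wI'' : Word (Set (Fin 2)) := fun j => if j = 0 then wI 0 else ∅ with hw
    have h0 : wI'' 0 = wI 0 := by simp [hw]
    have hnotL2 : ioComp T wI'' ∉ L2 := by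
      intro h
      have := h 1
      simp [ioComp, hw] at this
    have hL1 : ioComp T wI'' ∈ L1 := (hreal wI'').resolve_right hnotL2
    have := hL1
    simp only [L1, mem_setOf_eq, ioComp, mem_union, mem_image] at this
    have hq : Sum.inr () ∈ ioComp T wI'' 0 ↔ () ∈ T.out wI'' 0 := by
      simp only [ioComp, mem_union, mem_image]
      constructor
      · rintro (⟨x, _, hx⟩ | ⟨⟨⟩, h, _⟩)
        · exact absurd hx (by simp)
        · exact h
      · intro h
        exact Or.inr ⟨(), h, trivial⟩
    have hp : Sum.inl (0 : Fin 2) ∈ ioComp T wI'' 0 ↔ (0 : Fin 2) ∈ wI'' 0 := by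
      simp [ioComp]
    rw [hout0 wI wI'' h0.symm, ← hq, ← h0, ← hp]
    exact hL1
  have partb : ∀ wI wI' : Word (Set (Fin 2)),
      (∀ j, ioComp T wI j ∩ H18ᶜ = ioComp T wI' j ∩ H18ᶜ) →
      (ioComp T wI ∈ Lψ18 ↔ ioComp T wI' ∈ Lψ18) := by
    intro wI wI' hvisEq
    have hq : (() ∈ T.out wI 0) ↔ (() ∈ T.out wI' 0) := by
      rw [← hvis wI 0, ← hvis wI' 0, hvisEq 0]
    have hp : ((0 : Fin 2) ∈ wI 0) ↔ ((0 : Fin 2) ∈ wI' 0) := by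
      rw [← key wI, ← key wI', hq]
    simp only [Lψ18, mem_setOf_eq, ioComp, mem_union, mem_image]
    constructor
    · rintro (⟨a, ha, hEq⟩ | ⟨b, _, hEq⟩)
      · obtain rfl : a = 0 := by simpa using hEq
        exact Or.inl ⟨0, hp.mp ha, rfl⟩
      · exact absurd hEq (by simp)
    · rintro (⟨a, ha, hEq⟩ | ⟨b, _, hEq⟩)
      · obtain rfl : a = 0 := by simpa using hEq
        exact Or.inl ⟨0, hp.mpr ha, rfl⟩
      · exact absurd hEq (by simp)
  refine ⟨?_, partb, ?_⟩
  · -- part (a)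
    intro wI
    refine ⟨fun j => (ioComp T wI j ∩ H18ᶜ) ∪ {Sum.inl 0, Sum.inl 1}, ⟨?_, ?_⟩,
      fun j => (ioComp T wI j ∩ H18ᶜ) ∪ {Sum.inl 1}, ⟨?_, ?_⟩, ?_, ?_⟩
    · intro j
      ext x
      rcases x with a | b
      · simp [H18]
      · simp [H18]
    · right
      intro j
      simp
    · intro j
      ext x
      rcases x with a | b
      · simp [H18]
      · simp [H18]
    · right
      intro j
      simp
    · simp [Lψ18]
    · simp [Lψ18, H18, Sum.inl.injEq]
  · -- part (c)
    intro h
    obtain ⟨wI', hvis', hiff⟩ := h (fun _ => univ)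
    have h1 : ioComp T (fun _ => univ) ∈ Lψ18 := by simp [Lψ18, ioComp]
    exact (hiff.mp h1) ((partb _ _ hvis').mp h1)
end
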